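/- arXiv:1509.04251 — 11 statements merged into one kernel-verified Lean document; each statement's English description precedes it below -/
import Mathlib

section
/- Let R be a unital ring with an involution, let a ∈ R, and let m, n ∈ R be invertible and positive. Then the following are equivalent: (i) a is weighted Moore–Penrose invertible relative to m and n; (ii) a is invertible along n⁻¹·a*·m. Furthermore, in this case a^{∥ n⁻¹a*m} = a†_{m,n}. -/
/-- `b` is the inverse of `a` along `d`: `b*a*b = b`, `bR = dR` and `Rb = Rd`. -/
def IsInverseAlong {R : Type*} [Ring R] (b a d : R) : Prop :=
  b * a * b = b ∧ {x : R | ∃ r, x = b * r} = {x : R | ∃ r, x = d * r} ∧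
    {x : R | ∃ r, x = r * b} = {x : R | ∃ r, x = r * d}

/-- `x` is the weighted Moore–Penrose inverse of `a` relative to `m` and `n`. -/
def IsWMPInverse {R : Type*} [Ring R] [StarRing R] (x a m n : R) : Prop :=
  a * x * a = a ∧ x * a * x = x ∧ star (m * a * x) = m * a * x ∧
    star (n * x * a) = n * x * a

section Aux

variable {R : Type*} [Ring R] [StarRing R]

lemma star_unit_inv (n : Rˣ) (hn : star (n : R) = n) : star (↑n⁻¹ : R) = ↑n⁻¹ := by
  have h1 : star (↑n⁻¹ : R) * ↑n = 1 := by
    rw [show star (↑n⁻¹ : R) * ↑n = star (↑n⁻¹ : R) * star (↑n : R) from by rw [hn],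
      ← star_mul, Units.mul_inv, star_one]
  calc star (↑n⁻¹ : R) = star (↑n⁻¹ : R) * ↑n * ↑n⁻¹ := by rw [Units.mul_inv_cancel_right]
    _ = ↑n⁻¹ := by rw [h1, one_mul]

/-- Direction 2: any inverse along `n⁻¹ a* m` is a WMP inverse. -/
lemma wmp_of_along (a : R) (m n : Rˣ) (hm : star (m : R) = m) (hn : star (n : R) = n)
    (b : R) (h : IsInverseAlong b a ((↑n⁻¹ : R) * star a * (m : R))) :
    IsWMPInverse b a (m : R) (n : R) := by
  have hninv : star (↑n⁻¹ : R) = ↑n⁻¹ := star_unit_inv n hn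
  obtain ⟨hb, hRset, hLset⟩ := h
  -- d ∈ bR
  obtain ⟨t, ht⟩ : ∃ t, (↑n⁻¹ : R) * star a * ↑m = b * t := by
    have : ((↑n⁻¹ : R) * star a * ↑m) ∈ {x : R | ∃ r, x = b * r} := by
      rw [hRset]; exact ⟨1, (mul_one _).symm⟩
    exact this
  -- d ∈ Rb
  obtain ⟨v, hv⟩ : ∃ v, (↑n⁻¹ : R) * star a * ↑m = v * b := by
    have : ((↑n⁻¹ : R) * star a * ↑m) ∈ {x : R | ∃ r, x = r * b} := by
      rw [hLset]; exact ⟨1, (one_mul _).symm⟩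
    exact this
  have hb' : b * (a * b) = b := by rw [← mul_assoc, hb]
  -- d * a * b = d
  have h1 : ((↑n⁻¹ : R) * star a * ↑m) * a * b = (↑n⁻¹ : R) * star a * ↑m := by
    rw [hv]
    calc v * b * a * b = v * (b * (a * b)) := by simp [mul_assoc]
      _ = v * b := by rw [hb']
  -- b * a * d = d
  have h2 : b * a * ((↑n⁻¹ : R) * star a * ↑m) = (↑n⁻¹ : R) * star a * ↑m := by
    rw [ht]
    calc b * a * (b * t) = b * (a * b) * t := by simp [mul_assoc]
      _ = b * t := by rw [hb']
  -- star a * (m * (a * b)) = star a * m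
  have e1 : star a * (↑m * (a * b)) = star a * ↑m := by
    have h1' := congrArg (fun z : R => (↑n : R) * z) h1
    simpa [mul_assoc] using h1'
  -- star of e1
  have e2 : star b * (star a * (↑m * a)) = ↑m * a := by
    have := congrArg star e1
    simpa [star_mul, hm, mul_assoc] using this
  -- m a b Hermitian
  have H1 : star ((↑m : R) * a * b) = ↑m * a * b := by
    calc star ((↑m : R) * a * b) = star b * (star a * ↑m) := by simp [star_mul, hm, mul_assoc]
      _ = star b * (star a * (↑m * (a * b))) := by rw [e1]
      _ = (star b * (star a * (↑m * a))) * b := by simp [mul_assoc]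
      _ = (↑m * a) * b := by rw [e2]
  -- a b a = a
  have haba : a * b * a = a := by
    have key : (↑m : R) * (a * b * a) = ↑m * a := by
      calc (↑m : R) * (a * b * a) = (↑m * a * b) * a := by simp [mul_assoc]
        _ = star ((↑m : R) * a * b) * a := by rw [H1]
        _ = star b * (star a * (↑m * a)) := by simp [star_mul, hm, mul_assoc]
        _ = ↑m * a := e2
    exact (Units.mul_right_inj m).mp key
  -- b * a * (n⁻¹ * star a) = n⁻¹ * star a
  have h2' : (b * a * ((↑n⁻¹ : R) * star a)) * ↑m = ((↑n⁻¹ : R) * star a) * ↑m := by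
    simpa [mul_assoc] using h2
  have f1 : b * a * ((↑n⁻¹ : R) * star a) = (↑n⁻¹ : R) * star a :=
    (Units.mul_left_inj m).mp h2'
  have f2 : (↑n : R) * (b * (a * ((↑n⁻¹ : R) * star a))) = star a := by
    have := congrArg (fun z : R => (↑n : R) * z) f1
    simpa [mul_assoc] using this
  -- n b a Hermitian
  have g1 : star ((↑n : R) * b * a) = ↑n * (b * (a * ((↑n⁻¹ : R) * (star a * (star b * ↑n))))) := by
    calc star ((↑n : R) * b * a) = star a * (star b * ↑n) := by simp [star_mul, hn, mul_assoc]
      _ = ((↑n : R) * (b * (a * ((↑n⁻¹ : R) * star a)))) * (star b * ↑n) := by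
          nth_rewrite 1 [← f2]; rfl
      _ = ↑n * (b * (a * ((↑n⁻¹ : R) * (star a * (star b * ↑n))))) := by simp [mul_assoc]
  have g2 : (↑n : R) * b * a = ↑n * (b * (a * ((↑n⁻¹ : R) * (star a * (star b * ↑n))))) := by
    have := congrArg star g1
    simpa [star_mul, hn, hninv, mul_assoc] using this
  exact ⟨haba, hb, H1, g1.trans g2.symm⟩

/-- Direction 1: a WMP inverse is an inverse along `n⁻¹ a* m`. -/
lemma along_of_wmp (a : R) (m n : Rˣ) (hm : star (m : R) = m) (hn : star (n : R) = n)
    (x : R) (h : IsWMPInverse x a (m : R) (n : R)) :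
    IsInverseAlong x a ((↑n⁻¹ : R) * star a * (m : R)) := by
  have hminv : star (↑m⁻¹ : R) = ↑m⁻¹ := star_unit_inv m hm
  obtain ⟨hx1, hx2, hx3, hx4⟩ := h
  have hx2' : x * (a * x) = x := by rw [← mul_assoc, hx2]
  have hx1star : star a * (star x * star a) = star a := by
    simpa [star_mul, mul_assoc] using congrArg star hx1
  have hx3' : star x * (star a * ↑m) = ↑m * (a * x) := by
    simpa [star_mul, hm, mul_assoc] using hx3
  have hx4' : star a * (star x * ↑n) = ↑n * (x * a) := by
    simpa [star_mul, hn, mul_assoc] using hx4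
  -- x ∈ dR
  have k1 : (↑n⁻¹ : R) * star a * ↑m * ((↑m⁻¹ : R) * (star x * (↑n * x))) = x := by
    calc (↑n⁻¹ : R) * star a * ↑m * ((↑m⁻¹ : R) * (star x * (↑n * x)))
        = (↑n⁻¹ : R) * ((star a * (star x * ↑n)) * x) := by simp [mul_assoc]
      _ = (↑n⁻¹ : R) * ((↑n * (x * a)) * x) := by rw [hx4']
      _ = x := by simp [mul_assoc, hx2']
  -- d ∈ xR
  have k2 : x * (a * ((↑n⁻¹ : R) * (star a * ↑m))) = (↑n⁻¹ : R) * star a * ↑m := by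
    have : (↑n⁻¹ : R) * star a * ↑m = x * (a * ((↑n⁻¹ : R) * (star a * ↑m))) := by
      calc (↑n⁻¹ : R) * star a * ↑m
          = (↑n⁻¹ : R) * (star a * ↑m) := by rw [mul_assoc]
        _ = (↑n⁻¹ : R) * ((star a * (star x * star a)) * ↑m) := by rw [hx1star]
        _ = (↑n⁻¹ : R) * ((star a * (star x * ↑n)) * ((↑n⁻¹ : R) * (star a * ↑m))) := by
            simp [mul_assoc]
        _ = (↑n⁻¹ : R) * ((↑n * (x * a)) * ((↑n⁻¹ : R) * (star a * ↑m))) := by rw [hx4']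
        _ = x * (a * ((↑n⁻¹ : R) * (star a * ↑m))) := by simp [mul_assoc]
    exact this.symm
  -- x ∈ Rd
  have k3 : x * ((↑m⁻¹ : R) * (star x * ↑n)) * ((↑n⁻¹ : R) * star a * ↑m) = x := by
    calc x * ((↑m⁻¹ : R) * (star x * ↑n)) * ((↑n⁻¹ : R) * star a * ↑m)
        = x * ((↑m⁻¹ : R) * (star x * (star a * ↑m))) := by simp [mul_assoc]
      _ = x * ((↑m⁻¹ : R) * (↑m * (a * x))) := by rw [hx3']
      _ = x := by simp [mul_assoc, hx2']
  -- d ∈ Rx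
  have k4 : ((↑n⁻¹ : R) * (star a * (↑m * a))) * x = (↑n⁻¹ : R) * star a * ↑m := by
    calc ((↑n⁻¹ : R) * (star a * (↑m * a))) * x
        = (↑n⁻¹ : R) * (star a * (↑m * (a * x))) := by simp [mul_assoc]
      _ = (↑n⁻¹ : R) * (star a * (star x * (star a * ↑m))) := by rw [← hx3']
      _ = (↑n⁻¹ : R) * ((star a * (star x * star a)) * ↑m) := by simp [mul_assoc]
      _ = (↑n⁻¹ : R) * (star a * ↑m) := by rw [hx1star]
      _ = (↑n⁻¹ : R) * star a * ↑m := by rw [mul_assoc]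
  refine ⟨hx2, ?_, ?_⟩
  · ext y
    simp only [Set.mem_setOf_eq]
    constructor
    · rintro ⟨r, rfl⟩
      refine ⟨(↑m⁻¹ : R) * (star x * (↑n * x)) * r, ?_⟩
      conv_lhs => rw [← k1]
      simp [mul_assoc]
    · rintro ⟨r, rfl⟩
      refine ⟨a * ((↑n⁻¹ : R) * (star a * ↑m)) * r, ?_⟩
      conv_lhs => rw [← k2]
      simp [mul_assoc]
  · ext y
    simp only [Set.mem_setOf_eq]
    constructor
    · rintro ⟨r, rfl⟩
      refine ⟨r * (x * ((↑m⁻¹ : R) * (star x * ↑n))), ?_⟩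
      conv_lhs => rw [← k3]
      simp [mul_assoc]
    · rintro ⟨r, rfl⟩
      refine ⟨r * ((↑n⁻¹ : R) * (star a * (↑m * a))), ?_⟩
      conv_lhs => rw [← k4]
      simp [mul_assoc]

end Aux

theorem stmt_1 {R : Type*} [Ring R] [StarRing R] (a : R) (m n : Rˣ)
    (hm : ∃ y : R, star y = y ∧ (m : R) = y * y)
    (hn : ∃ y : R, star y = y ∧ (n : R) = y * y) :
    ((∃ x, IsWMPInverse x a (m : R) (n : R)) ↔
      ∃ b, IsInverseAlong b a ((↑n⁻¹ : R) * star a * (m : R))) ∧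
      ∀ b, IsInverseAlong b a ((↑n⁻¹ : R) * star a * (m : R)) →
        IsWMPInverse b a (m : R) (n : R) := by
  obtain ⟨y, hy, hyy⟩ := hm
  obtain ⟨z, hz, hzz⟩ := hn
  have hm' : star (m : R) = m := by rw [hyy, star_mul, hy]
  have hn' : star (n : R) = n := by rw [hzz, star_mul, hz]
  constructor
  · constructor
    · rintro ⟨x, hx⟩
      exact ⟨x, along_of_wmp a m n hm' hn' x hx⟩
    · rintro ⟨b, hb⟩
      exact ⟨b, wmp_of_along a m n hm' hn' b hb⟩
  · exact fun b hb => wmp_of_along a m n hm' hn' b hb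
end

section
/- Let R be a unital ring and let a, d ∈ R be such that a is invertible along d. If s, r ∈ R are invertible, then s·a·r⁻¹ is invertible along r·d·s⁻¹ and (s·a·r⁻¹)^{∥ r d s⁻¹} = r·a^{∥d}·s⁻¹. -/
theorem stmt_2 {R : Type*} [Ring R] (a d : R) (s r : Rˣ) (b : R)
    (h : IsInverseAlong b a d) :
    IsInverseAlong ((r : R) * b * (↑s⁻¹ : R)) ((s : R) * a * (↑r⁻¹ : R))
      ((r : R) * d * (↑s⁻¹ : R)) := by
  obtain ⟨h1, h2, h3⟩ := h
  refine ⟨?_, ?_, ?_⟩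
  · have : (r : R) * b * (↑s⁻¹ : R) * ((s : R) * a * (↑r⁻¹ : R)) * ((r : R) * b * (↑s⁻¹ : R))
        = (r : R) * (b * a * b) * (↑s⁻¹ : R) := by
      simp [mul_assoc]
    rw [this, h1]
  · ext x
    constructor
    · rintro ⟨t, rfl⟩
      have : b * ((↑s⁻¹ : R) * t) ∈ {x : R | ∃ r, x = b * r} := ⟨_, rfl⟩
      rw [h2] at this
      obtain ⟨u, hu⟩ := this
      exact ⟨(s : R) * u, by simp only [mul_assoc] at hu ⊢; rw [hu]; simp [mul_assoc]⟩
    · rintro ⟨t, rfl⟩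
      have : d * ((↑s⁻¹ : R) * t) ∈ {x : R | ∃ r, x = d * r} := ⟨_, rfl⟩
      rw [← h2] at this
      obtain ⟨u, hu⟩ := this
      exact ⟨(s : R) * u, by simp only [mul_assoc] at hu ⊢; rw [hu]; simp [mul_assoc]⟩
  · ext x
    constructor
    · rintro ⟨t, rfl⟩
      have : (t * (r : R)) * b ∈ {x : R | ∃ r, x = r * b} := ⟨_, rfl⟩
      rw [h3] at this
      obtain ⟨u, hu⟩ := this
      exact ⟨u * (↑r⁻¹ : R), by simp only [← mul_assoc]; rw [hu]; simp [mul_assoc]⟩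
    · rintro ⟨t, rfl⟩
      have : (t * (r : R)) * d ∈ {x : R | ∃ r, x = r * d} := ⟨_, rfl⟩
      rw [← h3] at this
      obtain ⟨u, hu⟩ := this
      exact ⟨u * (↑r⁻¹ : R), by simp only [← mul_assoc]; rw [hu]; simp [mul_assoc]⟩
end

section
/- Let R be a unital ring with an involution, let a ∈ R and let s, r ∈ R be invertible. If s⁻¹·a·r is Moore–Penrose invertible, then a is invertible along r·r*·a*·(s·s*)⁻¹ and (s⁻¹·a·r)† = r⁻¹·a^{∥ rr*a*(ss*)⁻¹}·s. -/
/-- `x` is the Moore–Penrose inverse of `a`. -/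
def IsMPInverse {R : Type*} [Ring R] [StarRing R] (x a : R) : Prop :=
  a * x * a = a ∧ x * a * x = x ∧ star (a * x) = a * x ∧ star (x * a) = x * a

lemma right_set_eq {R : Type*} [Ring R] {b d : R} (h1 : ∃ u, b = d * u) (h2 : ∃ u, d = b * u) :
    {x : R | ∃ r, x = b * r} = {x : R | ∃ r, x = d * r} := by
  obtain ⟨u, hu⟩ := h1; obtain ⟨v, hv⟩ := h2
  ext y; constructor
  · rintro ⟨t, rfl⟩; exact ⟨u * t, by rw [hu, mul_assoc]⟩
  · rintro ⟨t, rfl⟩; exact ⟨v * t, by rw [hv, mul_assoc]⟩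

lemma left_set_eq {R : Type*} [Ring R] {b d : R} (h1 : ∃ u, b = u * d) (h2 : ∃ u, d = u * b) :
    {x : R | ∃ r, x = r * b} = {x : R | ∃ r, x = r * d} := by
  obtain ⟨u, hu⟩ := h1; obtain ⟨v, hv⟩ := h2
  ext y; constructor
  · rintro ⟨t, rfl⟩; exact ⟨t * u, by rw [hu, mul_assoc]⟩
  · rintro ⟨t, rfl⟩; exact ⟨t * v, by rw [hv, mul_assoc]⟩

lemma isInverseAlong_unique {R : Type*} [Ring R] {b1 b2 a d : R}
    (h1 : IsInverseAlong b1 a d) (h2 : IsInverseAlong b2 a d) : b1 = b2 := by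
  obtain ⟨e1, r1, l1⟩ := h1
  obtain ⟨e2, r2, l2⟩ := h2
  have hb2 : b2 ∈ {x : R | ∃ t, x = b1 * t} := by
    rw [r1, ← r2]; exact ⟨1, (mul_one b2).symm⟩
  have hb1 : b1 ∈ {x : R | ∃ t, x = t * b2} := by
    rw [l2, ← l1]; exact ⟨1, (one_mul b1).symm⟩
  obtain ⟨v, hv⟩ := hb2
  obtain ⟨z, hz⟩ := hb1
  have k1 : b1 * a * b2 = b2 := by
    rw [hv, ← mul_assoc, e1]
  have k2 : b1 * a * b2 = b1 := by
    rw [hz, mul_assoc z, mul_assoc z, e2]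
  rw [← k2, k1]

theorem stmt_3 {R : Type*} [Ring R] [StarRing R] (a : R) (s r : Rˣ) (x : R)
    (hx : IsMPInverse x ((↑s⁻¹ : R) * a * (r : R))) :
    (∃ b, IsInverseAlong b a
        ((r : R) * star (r : R) * star a * (star (↑s⁻¹ : R) * (↑s⁻¹ : R)))) ∧
      ∀ b, IsInverseAlong b a
          ((r : R) * star (r : R) * star a * (star (↑s⁻¹ : R) * (↑s⁻¹ : R))) →
        x = (↑r⁻¹ : R) * b * (s : R) := by
  obtain ⟨h1, h2, h3, h4⟩ := hx
  obtain ⟨A, hA⟩ : ∃ A : R, A = (↑s⁻¹ : R) * a * (r : R) := ⟨_, rfl⟩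
  rw [← hA] at h1 h2 h3 h4
  have f1 : x = star A * star x * x := by
    calc x = x * A * x := h2.symm
    _ = star (x * A) * x := by rw [h4]
    _ = star A * star x * x := by rw [star_mul]
  have f2 : star A = x * A * star A := by
    calc star A = star (A * x * A) := by rw [h1]
    _ = star A * star (A * x) := by rw [star_mul]
    _ = star A * (star x * star A) := by rw [star_mul]
    _ = star A * star x * star A := by rw [mul_assoc]
    _ = star (x * A) * star A := by rw [star_mul]
    _ = x * A * star A := by rw [h4]
  have f3 : x = x * star x * star A := by
    calc x = x * A * x := h2.symm
    _ = x * (A * x) := by rw [mul_assoc]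
    _ = x * star (A * x) := by rw [h3]
    _ = x * (star x * star A) := by rw [star_mul]
    _ = x * star x * star A := by rw [mul_assoc]
  have f4 : star A = star A * A * x := by
    calc star A = star (A * x * A) := by rw [h1]
    _ = star A * star (A * x) := by rw [star_mul]
    _ = star A * (A * x) := by rw [h3]
    _ = star A * A * x := by rw [mul_assoc]
  have hdd : (r : R) * star (r : R) * star a * (star (↑s⁻¹ : R) * (↑s⁻¹ : R))
      = (r : R) * star A * (↑s⁻¹ : R) := by
    rw [hA]
    simp [star_mul, mul_assoc]
  have conjR : ∀ X Y Z : R, X = Y * Z →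
      (r : R) * X * (↑s⁻¹ : R) = ((r : R) * Y * (↑s⁻¹ : R)) * ((s : R) * Z * (↑s⁻¹ : R)) := by
    rintro X Y Z rfl
    simp [mul_assoc, Units.inv_mul_cancel_left]
  have conjL : ∀ X Y Z : R, X = Z * Y →
      (r : R) * X * (↑s⁻¹ : R) = ((r : R) * Z * (↑r⁻¹ : R)) * ((r : R) * Y * (↑s⁻¹ : R)) := by
    rintro X Y Z rfl
    simp [mul_assoc, Units.inv_mul_cancel_left]
  have key : IsInverseAlong ((r : R) * x * (↑s⁻¹ : R)) a ((r : R) * star A * (↑s⁻¹ : R)) := by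
    refine ⟨?_, ?_, ?_⟩
    · have e : ((r : R) * x * (↑s⁻¹ : R)) * a * ((r : R) * x * (↑s⁻¹ : R))
          = (r : R) * (x * A * x) * (↑s⁻¹ : R) := by
        rw [hA]; simp [mul_assoc]
      rw [e, h2]
    · exact right_set_eq
        ⟨(s : R) * (star x * x) * (↑s⁻¹ : R),
          conjR x (star A) (star x * x) (by rw [← mul_assoc]; exact f1)⟩
        ⟨(s : R) * (A * star A) * (↑s⁻¹ : R),
          conjR (star A) x (A * star A) (by rw [← mul_assoc]; exact f2)⟩
    · exact left_set_eq
        ⟨(r : R) * (x * star x) * (↑r⁻¹ : R),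
          conjL x (star A) (x * star x) f3⟩
        ⟨(r : R) * (star A * A) * (↑r⁻¹ : R),
          conjL (star A) x (star A * A) f4⟩
  rw [hdd]
  refine ⟨⟨_, key⟩, fun b hb => ?_⟩
  have hb0 : b = (r : R) * x * (↑s⁻¹ : R) := isInverseAlong_unique hb key
  rw [hb0]
  simp [mul_assoc, Units.inv_mul_cancel_left]
end

section
/- Let R be a unital ring with an involution, let a ∈ R and let s, r ∈ R be invertible. Suppose s⁻¹·a·r is Moore–Penrose invertible and a is Moore–Penrose invertible. Then (s⁻¹·a·r)† = r⁻¹·a†·s if and only if s·s*·a·R = a·r·r*·R and R·s·s*·a = R·a·r·r*. -/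
theorem mp_unique {R : Type*} [Ring R] [StarRing R] {b x x' : R}
    (h : IsMPInverse x b) (h' : IsMPInverse x' b) : x = x' := by
  obtain ⟨h1, h2, h3, h4⟩ := h
  obtain ⟨h1', h2', h3', h4'⟩ := h'
  have hbx : b * x = b * x' := by
    have e1 : b * x = (b * x) * (b * x') := by
      conv_lhs => rw [← h3]
      calc star (b * x) = star x * star b := by rw [star_mul]
        _ = star x * star (b * x' * b) := by rw [h1']
        _ = star x * (star b * star (b * x')) := by rw [star_mul]
        _ = star x * (star b * (b * x')) := by rw [h3']
        _ = star (b * x) * (b * x') := by rw [star_mul, mul_assoc]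
        _ = (b * x) * (b * x') := by rw [h3]
    have e2 : b * x' = (b * x) * (b * x') := by
      calc b * x' = (b * x * b) * x' := by rw [h1]
        _ = (b * x) * (b * x') := by rw [mul_assoc, mul_assoc]
    rw [e1, ← e2]
  have hxb : x * b = x' * b := by
    have e1 : x * b = (x' * b) * (x * b) := by
      conv_lhs => rw [← h4]
      calc star (x * b) = star b * star x := by rw [star_mul]
        _ = star (b * x' * b) * star x := by rw [h1']
        _ = star b * star (b * x') * star x := by rw [star_mul]
        _ = star b * (star x' * star b) * star x := by rw [star_mul]
        _ = star (x' * b) * (star b * star x) := by rw [star_mul]; noncomm_ring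
        _ = (x' * b) * star (x * b) := by rw [h4', star_mul]
        _ = (x' * b) * (x * b) := by rw [h4]
    have e2 : x' * b = (x' * b) * (x * b) := by
      calc x' * b = x' * (b * x * b) := by rw [h1]
        _ = (x' * b) * (x * b) := by noncomm_ring
    rw [e1, ← e2]
  calc x = x * b * x := h2.symm
    _ = x' * b * x := by rw [hxb]
    _ = x' * (b * x') := by rw [mul_assoc, hbx]
    _ = x' := by rw [← mul_assoc, h2']

theorem stmt_4 {R : Type*} [Ring R] [StarRing R] (a : R) (s r : Rˣ) (x y : R)
    (hx : IsMPInverse x ((↑s⁻¹ : R) * a * (r : R))) (hy : IsMPInverse y a) :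
    x = (↑r⁻¹ : R) * y * (s : R) ↔
      ({z : R | ∃ u, z = (s : R) * star (s : R) * a * u} =
          {z : R | ∃ u, z = a * (r : R) * star (r : R) * u} ∧
        {z : R | ∃ u, z = u * ((s : R) * star (s : R) * a)} =
          {z : R | ∃ u, z = u * (a * (r : R) * star (r : R))}) := by
  obtain ⟨hy1, hy2, hy3, hy4⟩ := hy
  -- star coercion facts
  have hcs : star ((s : Rˣ) : R) = ((star s : Rˣ) : R) := (Units.coe_star s).symm
  have hcr : star ((r : Rˣ) : R) = ((star r : Rˣ) : R) := (Units.coe_star r).symm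
  have hcsi : star ((↑s⁻¹ : R)) = (↑(star s)⁻¹ : R) := (Units.coe_star_inv s).symm
  have hcri : star ((↑r⁻¹ : R)) = (↑(star r)⁻¹ : R) := (Units.coe_star_inv r).symm
  have hcsi' : star ((↑(star s)⁻¹ : R)) = (↑s⁻¹ : R) := by
    rw [← Units.coe_star_inv (star s), star_star]
  have hcri' : star ((↑(star r)⁻¹ : R)) = (↑r⁻¹ : R) := by
    rw [← Units.coe_star_inv (star r), star_star]
  -- basic multiplication facts
  have hy1b : a * (y * a) = a := by rw [← mul_assoc, hy1]
  have hy1a : ∀ w : R, a * (y * (a * w)) = a * w := by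
    intro w; rw [← mul_assoc, ← mul_assoc, hy1]
  have hy2a : ∀ w : R, y * (a * (y * w)) = y * w := by
    intro w; rw [← mul_assoc, ← mul_assoc, hy2]
  -- the product simplifications
  have hBX : ((↑s⁻¹ : R) * a * ↑r) * ((↑r⁻¹ : R) * y * ↑s) = (↑s⁻¹ : R) * (a * y) * ↑s := by
    simp only [mul_assoc, Units.mul_inv_cancel_left]
  have hXB : ((↑r⁻¹ : R) * y * ↑s) * ((↑s⁻¹ : R) * a * ↑r) = (↑r⁻¹ : R) * (y * a) * ↑r := by
    simp only [mul_assoc, Units.mul_inv_cancel_left]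
  have h1 : ((↑s⁻¹ : R) * a * ↑r) * ((↑r⁻¹ : R) * y * ↑s) * ((↑s⁻¹ : R) * a * ↑r)
      = (↑s⁻¹ : R) * a * ↑r := by
    simp only [mul_assoc, Units.mul_inv_cancel_left, hy1a]
  have h2 : ((↑r⁻¹ : R) * y * ↑s) * ((↑s⁻¹ : R) * a * ↑r) * ((↑r⁻¹ : R) * y * ↑s)
      = (↑r⁻¹ : R) * y * ↑s := by
    simp only [mul_assoc, Units.mul_inv_cancel_left, hy2a]
  -- star of BX and XB
  have hstarBX : star ((↑s⁻¹ : R) * (a * y) * ↑s)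
      = (↑(star s) : R) * (a * y) * (↑(star s)⁻¹ : R) := by
    rw [star_mul, star_mul, hy3, hcs, hcsi, ← mul_assoc]
  have hstarXB : star ((↑r⁻¹ : R) * (y * a) * ↑r)
      = (↑(star r) : R) * (y * a) * (↑(star r)⁻¹ : R) := by
    rw [star_mul, star_mul, hy4, hcr, hcri, ← mul_assoc]
  -- C1 equivalence with the star condition on BX
  have hC1iff : ((↑(star s) : R) * (a * y) * (↑(star s)⁻¹ : R) = (↑s⁻¹ : R) * (a * y) * ↑s)
      ↔ ((↑s : R) * ↑(star s)) * (a * y) = (a * y) * ((↑s : R) * ↑(star s)) := by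
    constructor
    · intro h
      have h' := congrArg (fun z => (↑s : R) * z * (↑(star s) : R)) h
      simp only [mul_assoc, Units.mul_inv_cancel_left, Units.inv_mul_cancel_left,
        Units.mul_inv, Units.inv_mul, one_mul, mul_one] at h' ⊢
      exact h'
    · intro h
      have h' := congrArg (fun z => (↑s⁻¹ : R) * z * (↑(star s)⁻¹ : R)) h
      simp only [mul_assoc, Units.mul_inv_cancel_left, Units.inv_mul_cancel_left,
        Units.mul_inv, Units.inv_mul, one_mul, mul_one] at h' ⊢
      exact h'
  have hC2iff : ((↑(star r) : R) * (y * a) * (↑(star r)⁻¹ : R) = (↑r⁻¹ : R) * (y * a) * ↑r)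
      ↔ ((↑r : R) * ↑(star r)) * (y * a) = (y * a) * ((↑r : R) * ↑(star r)) := by
    constructor
    · intro h
      have h' := congrArg (fun z => (↑r : R) * z * (↑(star r) : R)) h
      simp only [mul_assoc, Units.mul_inv_cancel_left, Units.inv_mul_cancel_left,
        Units.mul_inv, Units.inv_mul, one_mul, mul_one] at h' ⊢
      exact h'
    · intro h
      have h' := congrArg (fun z => (↑r⁻¹ : R) * z * (↑(star r)⁻¹ : R)) h
      simp only [mul_assoc, Units.mul_inv_cancel_left, Units.inv_mul_cancel_left,
        Units.mul_inv, Units.inv_mul, one_mul, mul_one] at h' ⊢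
      exact h'
  -- C1 -> set1
  have hC1set : (((↑s : R) * ↑(star s)) * (a * y) = (a * y) * ((↑s : R) * ↑(star s)))
      → ({z : R | ∃ u, z = (s : R) * star (s : R) * a * u} =
          {z : R | ∃ u, z = a * (r : R) * star (r : R) * u}) := by
    intro C1
    have key1 : ∀ w : R, a * (y * ((↑s : R) * (↑(star s) * (a * w))))
        = (↑s : R) * (↑(star s) * (a * w)) := by
      intro w
      have h' := congrArg (fun z => z * (a * w)) C1
      simp only [mul_assoc, hy1a] at h'
      exact h'.symm
    have key2 : ∀ w : R, (↑s : R) * (↑(star s) * (a * (y * ((↑(star s)⁻¹ : R) * (↑s⁻¹ * w)))))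
        = a * (y * w) := by
      intro w
      have h' := congrArg (fun z => z * ((↑(star s)⁻¹ : R) * ((↑s⁻¹ : R) * w))) C1.symm
      simp only [mul_assoc, Units.mul_inv_cancel_left, Units.inv_mul_cancel_left,
        Units.mul_inv, Units.inv_mul, one_mul, mul_one] at h'
      exact h'.symm
    ext z
    simp only [Set.mem_setOf_eq, hcs, hcr]
    constructor
    · rintro ⟨u, rfl⟩
      refine ⟨(↑(star r)⁻¹ : R) * (↑r⁻¹ * (y * ((↑s : R) * (↑(star s) * (a * u))))), ?_⟩
      simp only [mul_assoc, Units.mul_inv_cancel_left, Units.inv_mul_cancel_left,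
        Units.mul_inv, Units.inv_mul, one_mul, mul_one, key1]
    · rintro ⟨u, rfl⟩
      refine ⟨y * ((↑(star s)⁻¹ : R) * (↑s⁻¹ * (a * (↑r * ((↑(star r) : R) * u))))), ?_⟩
      simp only [mul_assoc, Units.mul_inv_cancel_left, Units.inv_mul_cancel_left,
        Units.mul_inv, Units.inv_mul, one_mul, mul_one, key2, hy1a]
  -- set1 -> C1
  have hsetC1 : ({z : R | ∃ u, z = (s : R) * star (s : R) * a * u} =
          {z : R | ∃ u, z = a * (r : R) * star (r : R) * u})
      → (((↑s : R) * ↑(star s)) * (a * y) = (a * y) * ((↑s : R) * ↑(star s))) := by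
    intro hS
    have hmem : ((↑s : R) * star (↑s : R) * a) ∈
        {z : R | ∃ u, z = a * (r : R) * star (r : R) * u} := by
      rw [← hS]; exact ⟨1, by rw [mul_one]⟩
    obtain ⟨u₀, hu₀⟩ := hmem
    rw [hcs, hcr] at hu₀
    -- hu₀ : ↑s * ↑(star s) * a = a * ↑r * ↑(star r) * u₀
    have e1 : (a * y) * (((↑s : R) * ↑(star s)) * (a * y))
        = ((↑s : R) * ↑(star s)) * (a * y) := by
      have : ((↑s : R) * ↑(star s)) * (a * y) = (a * ↑r * ↑(star r) * u₀) * y := by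
        rw [← hu₀]; noncomm_ring
      rw [this]
      simp only [mul_assoc, hy1a]
    have hP : star ((↑s : R) * ↑(star s)) = (↑s : R) * ↑(star s) := by
      rw [star_mul, ← hcs, star_star, hcs]
    have e2 := congrArg star e1
    rw [star_mul, star_mul, hy3, hP] at e2
    -- e2 : ((a*y) * (↑s * ↑(star s))) * (a*y) = (a*y) * (↑s * ↑(star s))
    calc ((↑s : R) * ↑(star s)) * (a * y)
        = (a * y) * (((↑s : R) * ↑(star s)) * (a * y)) := e1.symm
      _ = ((a * y) * ((↑s : R) * ↑(star s))) * (a * y) := by noncomm_ring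
      _ = (a * y) * ((↑s : R) * ↑(star s)) := e2
  -- C2 -> set2
  have hC2set : (((↑r : R) * ↑(star r)) * (y * a) = (y * a) * ((↑r : R) * ↑(star r)))
      → ({z : R | ∃ u, z = u * ((s : R) * star (s : R) * a)} =
          {z : R | ∃ u, z = u * (a * (r : R) * star (r : R))}) := by
    intro C2
    have key3 : a * ((↑(star r)⁻¹ : R) * (↑r⁻¹ * (y * (a * (↑r * ↑(star r)))))) = a := by
      have h' := congrArg (fun z => a * ((↑(star r)⁻¹ : R) * ((↑r⁻¹ : R) * z))) C2
      simp only [mul_assoc, Units.mul_inv_cancel_left, Units.inv_mul_cancel_left,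
        Units.mul_inv, Units.inv_mul, one_mul, mul_one, hy1b] at h'
      exact h'.symm
    have key4 : a * ((↑r : R) * (↑(star r) * (y * a))) = a * ((↑r : R) * ↑(star r)) := by
      have h' := congrArg (fun z => a * z) C2
      simp only [mul_assoc, hy1a] at h'
      exact h'
    ext z
    simp only [Set.mem_setOf_eq, hcs, hcr]
    constructor
    · rintro ⟨u, rfl⟩
      refine ⟨u * ((↑s : R) * (↑(star s) * a)) * ((↑(star r)⁻¹ : R) * (↑r⁻¹ * y)), ?_⟩
      simp only [mul_assoc, Units.mul_inv_cancel_left, Units.inv_mul_cancel_left,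
        Units.mul_inv, Units.inv_mul, one_mul, mul_one, key3]
    · rintro ⟨u, rfl⟩
      refine ⟨u * (a * (↑r * ((↑(star r) : R) * y))) * ((↑(star s)⁻¹ : R) * ↑s⁻¹), ?_⟩
      simp only [mul_assoc, Units.mul_inv_cancel_left, Units.inv_mul_cancel_left,
        Units.mul_inv, Units.inv_mul, one_mul, mul_one, key4]
  -- set2 -> C2
  have hsetC2 : ({z : R | ∃ u, z = u * ((s : R) * star (s : R) * a)} =
          {z : R | ∃ u, z = u * (a * (r : R) * star (r : R))})
      → (((↑r : R) * ↑(star r)) * (y * a) = (y * a) * ((↑r : R) * ↑(star r))) := by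
    intro hS
    have hmem : a ∈ {z : R | ∃ u, z = u * (a * (r : R) * star (r : R))} := by
      rw [← hS]
      refine ⟨(↑(star s)⁻¹ : R) * ↑s⁻¹, ?_⟩
      rw [hcs]
      simp only [mul_assoc, Units.mul_inv_cancel_left, Units.inv_mul_cancel_left,
        Units.mul_inv, Units.inv_mul, one_mul, mul_one]
    obtain ⟨v, hv⟩ := hmem
    rw [hcr] at hv
    -- hv : a = v * (a * ↑r * ↑(star r))
    have h1' : (y * a) * ((↑(star r)⁻¹ : R) * ↑r⁻¹) = y * (v * a) := by
      nth_rewrite 1 [hv]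
      simp only [mul_assoc, Units.mul_inv_cancel_left, Units.inv_mul_cancel_left,
        Units.mul_inv, Units.inv_mul, one_mul, mul_one]
    have e1 : ((y * a) * ((↑(star r)⁻¹ : R) * ↑r⁻¹)) * (y * a)
        = (y * a) * ((↑(star r)⁻¹ : R) * ↑r⁻¹) := by
      rw [h1']
      simp only [mul_assoc, hy1b]
    have hQi : star ((↑(star r)⁻¹ : R) * ↑r⁻¹) = (↑(star r)⁻¹ : R) * ↑r⁻¹ := by
      rw [star_mul, hcri, hcri']
    have e2 := congrArg star e1
    rw [star_mul, hy4, star_mul, hQi, hy4] at e2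
    -- e2 : (y*a) * (Qi * (y*a)) = Qi * (y*a)
    have hcm : (y * a) * ((↑(star r)⁻¹ : R) * ↑r⁻¹)
        = ((↑(star r)⁻¹ : R) * ↑r⁻¹) * (y * a) := by
      calc (y * a) * ((↑(star r)⁻¹ : R) * ↑r⁻¹)
          = ((y * a) * ((↑(star r)⁻¹ : R) * ↑r⁻¹)) * (y * a) := e1.symm
        _ = (y * a) * (((↑(star r)⁻¹ : R) * ↑r⁻¹) * (y * a)) := by noncomm_ring
        _ = ((↑(star r)⁻¹ : R) * ↑r⁻¹) * (y * a) := e2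
    have h' := congrArg (fun z => (↑r : R) * (↑(star r) * (z * ((↑r : R) * ↑(star r))))) hcm
    simp only [mul_assoc, Units.mul_inv_cancel_left, Units.inv_mul_cancel_left,
      Units.mul_inv, Units.inv_mul, one_mul, mul_one] at h' ⊢
    exact h'
  -- final assembly
  constructor
  · intro hxe
    rw [hxe] at hx
    obtain ⟨_, _, hx3, hx4⟩ := hx
    rw [hBX, hstarBX] at hx3
    rw [hXB, hstarXB] at hx4
    exact ⟨hC1set (hC1iff.mp hx3), hC2set (hC2iff.mp hx4)⟩
  · rintro ⟨hS1, hS2⟩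
    have C1 := hsetC1 hS1
    have C2 := hsetC2 hS2
    have hmp : IsMPInverse ((↑r⁻¹ : R) * y * ↑s) ((↑s⁻¹ : R) * a * ↑r) :=
      ⟨h1, h2,
        by rw [hBX, hstarBX]; exact hC1iff.mpr C1,
        by rw [hXB, hstarXB]; exact hC2iff.mpr C2⟩
    exact mp_unique hx hmp
end

section
/- Let R be a unital ring, let a ∈ R and let s, r ∈ R be invertible. If s⁻¹·a·r is group invertible, then a is invertible along r·s⁻¹·a·r·s⁻¹ and (s⁻¹·a·r)^# = r⁻¹·a^{∥ rs⁻¹ars⁻¹}·s. -/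
/-- `x` is the group inverse of `a`. -/
def IsGroupInverse {R : Type*} [Ring R] (x a : R) : Prop :=
  a * x * a = a ∧ x * a * x = x ∧ a * x = x * a

/-- Uniqueness of the inverse along `d`. -/
lemma inverseAlong_unique {R : Type*} [Ring R] {b b' a d : R}
    (hb : IsInverseAlong b a d) (hb' : IsInverseAlong b' a d) : b = b' := by
  obtain ⟨hb1, hbR, hRb⟩ := hb
  obtain ⟨hb'1, hb'R, hRb'⟩ := hb'
  rw [Set.ext_iff] at hbR hRb hb'R hRb'
  obtain ⟨t, ht⟩ : ∃ t, d = b * t := (hbR d).mpr ⟨1, (mul_one d).symm⟩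
  obtain ⟨u, hu⟩ : ∃ u, b' = d * u := (hb'R b').mp ⟨1, (mul_one b').symm⟩
  obtain ⟨w, hw⟩ : ∃ w, b = w * d := (hRb b).mp ⟨1, (one_mul b).symm⟩
  obtain ⟨v, hv⟩ : ∃ v, d = v * b' := (hRb' d).mpr ⟨1, (one_mul d).symm⟩
  have had : b * a * d = d := by
    rw [ht, ← mul_assoc, hb1]
  have hda : d * a * b' = d := by
    rw [hv, mul_assoc, mul_assoc, ← mul_assoc b' a b', hb'1]
  calc b = w * d := hw
    _ = w * (d * a * b') := by rw [hda]
    _ = (w * d) * a * b' := by noncomm_ring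
    _ = b * a * b' := by rw [hw]
    _ = b * a * (d * u) := by rw [hu]
    _ = (b * a * d) * u := by noncomm_ring
    _ = d * u := by rw [had]
    _ = b' := hu.symm

theorem stmt_5 {R : Type*} [Ring R] (a : R) (s r : Rˣ) (x : R)
    (hx : IsGroupInverse x ((↑s⁻¹ : R) * a * (r : R))) :
    (∃ b, IsInverseAlong b a ((r : R) * (↑s⁻¹ : R) * a * (r : R) * (↑s⁻¹ : R))) ∧
      ∀ b, IsInverseAlong b a ((r : R) * (↑s⁻¹ : R) * a * (r : R) * (↑s⁻¹ : R)) →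
        x = (↑r⁻¹ : R) * b * (s : R) := by
  obtain ⟨c, rfl⟩ : ∃ c : R, a = ↑s * c * ↑r⁻¹ :=
    ⟨↑s⁻¹ * a * ↑r, by simp [mul_assoc]⟩
  have hc : (↑s⁻¹ : R) * (↑s * c * ↑r⁻¹) * ↑r = c := by simp [mul_assoc]
  rw [hc] at hx
  obtain ⟨e1, e2, e3⟩ := hx
  -- associated rewrite rules
  have A1 : ∀ y : R, x * (c * (x * y)) = x * y := fun y => by
    rw [← mul_assoc, ← mul_assoc, e2]
  have A3 : ∀ y : R, c * (x * (x * y)) = x * y := fun y => by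
    rw [← mul_assoc, ← mul_assoc, e3, mul_assoc, ← mul_assoc, e2]
  have A4 : ∀ y : R, x * (c * (c * y)) = c * y := fun y => by
    rw [← mul_assoc, ← mul_assoc, ← e3, mul_assoc, ← mul_assoc, e1]
  have A5 : ∀ y : R, x * (x * (c * y)) = x * y := fun y => by
    rw [← mul_assoc, ← mul_assoc, mul_assoc x x c, ← e3, ← mul_assoc, e2]
  have A6 : ∀ y : R, c * (c * (x * y)) = c * y := fun y => by
    rw [← mul_assoc, ← mul_assoc, mul_assoc c c x, e3, ← mul_assoc, e1]
  have hb : IsInverseAlong (↑r * x * ↑s⁻¹) (↑s * c * ↑r⁻¹)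
      ((r : R) * (↑s⁻¹ : R) * (↑s * c * ↑r⁻¹) * (r : R) * (↑s⁻¹ : R)) := by
    refine ⟨?_, ?_, ?_⟩
    · simp [mul_assoc, A1]
    · ext y
      simp only [Set.mem_setOf_eq]
      constructor
      · rintro ⟨t, rfl⟩
        exact ⟨↑s * (x * (x * (↑s⁻¹ * t))), by simp [mul_assoc, A3]⟩
      · rintro ⟨t, rfl⟩
        exact ⟨↑s * (c * (c * (↑s⁻¹ * t))), by simp [mul_assoc, A4]⟩
    · ext y
      simp only [Set.mem_setOf_eq]
      constructor
      · rintro ⟨t, rfl⟩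
        refine ⟨t * (↑r * (x * (x * ↑r⁻¹))), ?_⟩
        simp [mul_assoc, A5]
      · rintro ⟨t, rfl⟩
        refine ⟨t * (↑r * (c * (c * ↑r⁻¹))), ?_⟩
        simp [mul_assoc, A6]
  refine ⟨⟨_, hb⟩, fun b' hb' => ?_⟩
  have := inverseAlong_unique hb hb'
  rw [← this]
  simp [mul_assoc]
end

section
/- Let R be a unital ring, let a ∈ R and let s, r ∈ R be invertible. Suppose s⁻¹·a·r is group invertible and a is group invertible. Then (s⁻¹·a·r)^# = r⁻¹·a^#·s if and only if R·a·s·r⁻¹ = R·r·s⁻¹·a and s·r⁻¹·a·R = a·r·s⁻¹·R. -/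
private theorem gi_unique {R : Type*} [Ring R] {b x x' : R}
    (h : IsGroupInverse x b) (h' : IsGroupInverse x' b) : x = x' := by
  obtain ⟨h1, h2, h3⟩ := h
  obtain ⟨h1', h2', h3'⟩ := h'
  have e1 : b * x = (b * x') * (b * x) := by
    conv_lhs => rw [← h1']
    noncomm_ring
  have e2 : b * x' = (b * x') * (b * x) := by
    calc b * x' = x' * b := h3'
      _ = x' * (b * x * b) := by rw [h1]
      _ = (x' * b) * (x * b) := by noncomm_ring
      _ = (b * x') * (b * x) := by rw [← h3, ← h3']
  have he : b * x = b * x' := e1.trans e2.symm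
  calc x = x * b * x := h2.symm
    _ = x * (b * x) := by rw [mul_assoc]
    _ = x * (b * x') := by rw [he]
    _ = (x * b) * x' := by rw [mul_assoc]
    _ = (b * x) * x' := by rw [← h3]
    _ = (b * x') * x' := by rw [he]
    _ = (x' * b) * x' := by rw [h3']
    _ = x' := h2'

private theorem aux_fwd {R : Type*} [Ring R] {a y g h : R}
    (hgh : g * h = 1) (hhg : h * g = 1)
    (h1 : a * y * a = a) (h3 : a * y = y * a)
    (E : a * y * g = g * (y * a)) :
    (a * g = a * g * y * g * (h * a)) ∧
    (h * a = h * a * h * y * (a * g)) ∧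
    (g * a = a * h * (g * y * g * a)) ∧
    (a * h = g * a * (y * h * (a * h))) := by
  have aay : a * a * y = a := by rw [mul_assoc, h3, ← mul_assoc, h1]
  have yaa : y * a * a = a := by rw [← h3, h1]
  have key1 : a * g * y * a = a * g := by
    calc a * g * y * a = a * (g * (y * a)) := by noncomm_ring
      _ = a * (a * y * g) := by rw [E]
      _ = (a * a * y) * g := by noncomm_ring
      _ = a * g := by rw [aay]
  have key2 : h * a * y * g = y * a := by
    calc h * a * y * g = h * (a * y * g) := by noncomm_ring
      _ = h * (g * (y * a)) := by rw [E]
      _ = (h * g) * (y * a) := by noncomm_ring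
      _ = y * a := by rw [hhg, one_mul]
  have key3 : a * y * g * a = g * a := by
    calc a * y * g * a = (a * y * g) * a := rfl
      _ = (g * (y * a)) * a := by rw [E]
      _ = g * (y * a * a) := by noncomm_ring
      _ = g * a := by rw [yaa]
  have key4 : g * a * y * h = a * y := by
    calc g * a * y * h = g * (a * y) * h := by rw [mul_assoc g a y]
      _ = g * (y * a) * h := by rw [h3]
      _ = (a * y * g) * h := by rw [← E]
      _ = a * y * (g * h) := by noncomm_ring
      _ = a * y := by rw [hgh, mul_one]
  refine ⟨?_, ?_, ?_, ?_⟩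
  · calc a * g = a * g * y * a := key1.symm
      _ = a * g * y * ((g * h) * a) := by rw [hgh, one_mul]
      _ = a * g * y * g * (h * a) := by noncomm_ring
  · have key2' : h * y * a * g = y * a := by
      rw [mul_assoc h y a, ← h3, ← mul_assoc]; exact key2.trans h3.symm
    calc h * a = h * (a * y * a) := by rw [h1]
      _ = (h * a) * (y * a) := by noncomm_ring
      _ = (h * a) * (h * y * a * g) := by rw [key2']
      _ = h * a * h * y * (a * g) := by noncomm_ring
  · calc g * a = a * y * g * a := key3.symm
      _ = a * ((h * g) * (y * g * a)) := by rw [hhg]; noncomm_ring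
      _ = a * h * (g * y * g * a) := by noncomm_ring
  · calc a * h = (a * y * a) * h := by rw [h1]
      _ = (a * y) * (a * h) := by noncomm_ring
      _ = (g * a * y * h) * (a * h) := by rw [key4]
      _ = g * a * (y * h * (a * h)) := by noncomm_ring

private theorem aux_bwd {R : Type*} [Ring R] {a y g w v : R}
    (h1 : a * y * a = a) (h3 : a * y = y * a)
    (hw : a * g = w * a) (hv : g * a = a * v) :
    a * y * g = g * (y * a) := by
  have aay : a * a * y = a := by rw [mul_assoc, h3, ← mul_assoc, h1]
  have hA : a * y * g = y * w * a := by
    calc a * y * g = y * (a * g) := by rw [h3]; noncomm_ring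
      _ = y * (w * a) := by rw [hw]
      _ = y * w * a := by rw [mul_assoc]
  have hC : g * (y * a) = a * v * y := by
    calc g * (y * a) = (g * a) * y := by rw [← h3, mul_assoc]
      _ = (a * v) * y := by rw [hv]
  calc a * y * g = y * w * a := hA
    _ = y * w * (a * a * y) := by rw [aay]
    _ = (y * w * a) * (a * y) := by noncomm_ring
    _ = (a * y * g) * (a * y) := by rw [hA]
    _ = (a * y) * (g * (y * a)) := by rw [h3]; noncomm_ring
    _ = (a * y) * (a * v * y) := by rw [hC]
    _ = (a * y * a) * (v * y) := by noncomm_ring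
    _ = a * (v * y) := by rw [h1]
    _ = (a * v) * y := by rw [mul_assoc]
    _ = (g * a) * y := by rw [hv]
    _ = g * (y * a) := by rw [← h3, mul_assoc]

theorem stmt_6 {R : Type*} [Ring R] (a : R) (s r : Rˣ) (x y : R)
    (hx : IsGroupInverse x ((↑s⁻¹ : R) * a * (r : R))) (hy : IsGroupInverse y a) :
    x = (↑r⁻¹ : R) * y * (s : R) ↔
      ({z : R | ∃ u, z = u * (a * (s : R) * (↑r⁻¹ : R))} =
          {z : R | ∃ u, z = u * ((r : R) * (↑s⁻¹ : R) * a)} ∧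
        {z : R | ∃ u, z = (s : R) * (↑r⁻¹ : R) * a * u} =
          {z : R | ∃ u, z = a * (r : R) * (↑s⁻¹ : R) * u}) := by
  obtain ⟨hy1, hy2, hy3⟩ := hy
  have hgh : ((s : R) * ↑r⁻¹) * ((r : R) * ↑s⁻¹) = 1 := by simp [mul_assoc]
  have hhg : ((r : R) * ↑s⁻¹) * ((s : R) * ↑r⁻¹) = 1 := by simp [mul_assoc]
  constructor
  · intro h
    have comm := hx.2.2
    rw [h] at comm
    have E : a * y * ((s : R) * ↑r⁻¹) = ((s : R) * ↑r⁻¹) * (y * a) := by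
      have h' := congrArg (fun z => (↑s : R) * z * (↑r⁻¹ : R)) comm
      simpa [mul_assoc] using h'
    obtain ⟨F1, F2, F3, F4⟩ := aux_fwd hgh hhg hy1 hy3 E
    constructor
    · ext z
      simp only [Set.mem_setOf_eq]
      constructor
      · rintro ⟨u, rfl⟩
        refine ⟨u * (a * (s : R) * ↑r⁻¹ * y * (s : R) * ↑r⁻¹), ?_⟩
        conv_lhs => rw [mul_assoc a (s : R) (↑r⁻¹ : R), F1]
        noncomm_ring
      · rintro ⟨u, rfl⟩
        refine ⟨u * ((r : R) * ↑s⁻¹ * a * (r : R) * ↑s⁻¹ * y), ?_⟩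
        conv_lhs => rw [F2]
        noncomm_ring
    · ext z
      simp only [Set.mem_setOf_eq]
      constructor
      · rintro ⟨u, rfl⟩
        refine ⟨(s : R) * ↑r⁻¹ * y * (s : R) * ↑r⁻¹ * a * u, ?_⟩
        conv_lhs => rw [F3]
        noncomm_ring
      · rintro ⟨u, rfl⟩
        refine ⟨y * (r : R) * ↑s⁻¹ * a * (r : R) * ↑s⁻¹ * u, ?_⟩
        conv_lhs => rw [mul_assoc a (r : R) (↑s⁻¹ : R), F4]
        noncomm_ring
  · rintro ⟨heq1, heq2⟩
    have hmem1 : a * (s : R) * ↑r⁻¹ ∈ {z : R | ∃ u, z = u * ((r : R) * ↑s⁻¹ * a)} := by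
      rw [← heq1]; exact ⟨1, (one_mul _).symm⟩
    have hmem2 : (s : R) * ↑r⁻¹ * a ∈ {z : R | ∃ u, z = a * (r : R) * ↑s⁻¹ * u} := by
      rw [← heq2]; exact ⟨1, (mul_one _).symm⟩
    obtain ⟨w, hw⟩ := hmem1
    obtain ⟨v, hv⟩ := hmem2
    have hw' : a * ((s : R) * ↑r⁻¹) = (w * ((r : R) * ↑s⁻¹)) * a := by
      rw [← mul_assoc a, hw]; noncomm_ring
    have hv' : ((s : R) * ↑r⁻¹) * a = a * (((r : R) * ↑s⁻¹) * v) := by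
      rw [hv]; noncomm_ring
    have E := aux_bwd hy1 hy3 hw' hv'
    have hgi : IsGroupInverse ((↑r⁻¹ : R) * y * (s : R)) ((↑s⁻¹ : R) * a * (r : R)) := by
      refine ⟨?_, ?_, ?_⟩
      · calc (↑s⁻¹ : R) * a * ↑r * (↑r⁻¹ * y * ↑s) * (↑s⁻¹ * a * ↑r)
            = (↑s⁻¹ : R) * (a * y * a) * ↑r := by simp [mul_assoc]
          _ = (↑s⁻¹ : R) * a * ↑r := by rw [hy1]
      · calc (↑r⁻¹ : R) * y * ↑s * (↑s⁻¹ * a * ↑r) * (↑r⁻¹ * y * ↑s)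
            = (↑r⁻¹ : R) * (y * a * y) * ↑s := by simp [mul_assoc]
          _ = (↑r⁻¹ : R) * y * ↑s := by rw [hy2]
      · calc (↑s⁻¹ : R) * a * ↑r * (↑r⁻¹ * y * ↑s)
            = (↑s⁻¹ : R) * (a * y) * ↑s := by simp [mul_assoc]
          _ = (↑r⁻¹ : R) * (y * a) * ↑r := by
              have h' := congrArg (fun z => (↑s⁻¹ : R) * z * (↑r : R)) E
              simpa [mul_assoc] using h'
          _ = (↑r⁻¹ : R) * y * ↑s * (↑s⁻¹ * a * ↑r) := by simp [mul_assoc]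
    exact gi_unique hx hgi
end

section
/- Let R be a unital ring with an involution and let a, d ∈ R be such that a is invertible along d. If there exists an inner inverse d⁻ of d such that d·d⁻ is Hermitian, then a^{∥d}·a is Hermitian if and only if (d·a)* ∈ dR. -/
theorem stmt_7 {R : Type*} [Ring R] [StarRing R] (a d b : R)
    (h : IsInverseAlong b a d)
    (hd : ∃ di, d * di * d = d ∧ star (d * di) = d * di) :
    star (b * a) = b * a ↔ ∃ u, star (d * a) = d * u := by
  obtain ⟨hbab, hR, hL⟩ := h
  obtain ⟨s, hs⟩ : ∃ r, b = d * r := (Set.ext_iff.mp hR b).mp ⟨1, (mul_one b).symm⟩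
  obtain ⟨t, ht⟩ : ∃ r, d = b * r := (Set.ext_iff.mp hR d).mpr ⟨1, (mul_one d).symm⟩
  obtain ⟨w, hw⟩ : ∃ r, b = r * d := (Set.ext_iff.mp hL b).mp ⟨1, (one_mul b).symm⟩
  obtain ⟨v, hv⟩ : ∃ r, d = r * b := (Set.ext_iff.mp hL d).mpr ⟨1, (one_mul d).symm⟩
  have hbad : b * a * d = d := by
    rw [ht, ← mul_assoc, hbab]
  constructor
  · intro he
    refine ⟨s * a * star v, ?_⟩
    have : star (d * a) = star (b * a) * star v := by
      rw [hv, star_mul, star_mul, ← mul_assoc, ← star_mul]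
    rw [this, he, hs]
    noncomm_ring
  · rintro ⟨u, hu⟩
    have hstar : star (b * a) = d * (u * star w) := by
      calc star (b * a) = star a * (star d * star w) := by rw [star_mul, hw, star_mul]
        _ = star (d * a) * star w := by rw [star_mul, mul_assoc]
        _ = d * (u * star w) := by rw [hu, mul_assoc]
    have key : (b * a) * star (b * a) = star (b * a) := by
      rw [hstar, ← mul_assoc, hbad]
    have key2 : (b * a) * star (b * a) = b * a := by
      have := congrArg star key
      rwa [star_mul, star_star] at this
    rw [← key, key2]
end

section
/- Let R be a unital ring with an involution and let a, d ∈ R be such that a is invertible along d. If there exists an inner inverse d⁻ of d such that d⁻·d is Hermitian, then a·a^{∥d} is Hermitian if and only if a·d ∈ d*R. -/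
theorem stmt_8 {R : Type*} [Ring R] [StarRing R] (a d b : R)
    (h : IsInverseAlong b a d)
    (hd : ∃ di, d * di * d = d ∧ star (di * d) = di * d) :
    star (a * b) = a * b ↔ ∃ u, a * d = star d * u := by
  obtain ⟨hbab, hR, hL⟩ := h
  obtain ⟨di, hdi, hherm⟩ := hd
  have hd1 : (d : R) ∈ {x : R | ∃ r, x = b * r} := hR ▸ ⟨1, (mul_one d).symm⟩
  obtain ⟨r1, hr1⟩ := hd1
  have hb1 : (b : R) ∈ {x : R | ∃ r, x = d * r} := hR.symm ▸ ⟨1, (mul_one b).symm⟩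
  obtain ⟨s, hs⟩ := hb1
  have hd2 : (d : R) ∈ {x : R | ∃ r, x = r * b} := hL ▸ ⟨1, (one_mul d).symm⟩
  obtain ⟨r2, hr2⟩ := hd2
  have hb2 : (b : R) ∈ {x : R | ∃ r, x = r * d} := hL.symm ▸ ⟨1, (one_mul b).symm⟩
  obtain ⟨t, ht⟩ := hb2
  have hdab : d * (a * b) = d := by
    conv_lhs => rw [hr2]
    rw [mul_assoc, ← mul_assoc b a b, hbab, ← hr2]
  have hbad : b * (a * d) = d := by
    conv_lhs => rw [hr1]
    rw [← mul_assoc, ← mul_assoc, hbab, ← hr1]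
  constructor
  · intro hab
    refine ⟨star t * (star a * (a * d)), ?_⟩
    calc a * d = (a * b) * (a * d) := by
          conv_lhs => rw [← hbad]
          rw [← mul_assoc, ← mul_assoc]
      _ = star (a * b) * (a * d) := by rw [hab]
      _ = star b * (star a * (a * d)) := by rw [star_mul, mul_assoc]
      _ = star d * (star t * (star a * (a * d))) := by
          rw [ht, star_mul, mul_assoc]
  · rintro ⟨u, hu⟩
    set f := di * d with hf
    have hfd : f * star d = star d := by
      have hdf : d * f = d := by rw [hf, ← mul_assoc, hdi]
      conv_rhs => rw [← hdf, star_mul, hherm]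
    have hfe : f * (a * b) = a * b := by
      have he : a * b = star d * (u * s) := by
        rw [hs, ← mul_assoc, hu, mul_assoc]
      rw [he, ← mul_assoc, hfd]
    have hef : f * (a * b) = f := by
      rw [hf, mul_assoc, hdab]
    have heq : a * b = f := by rw [← hfe, hef]
    rw [heq, hherm]
end

section
/- Let R be a unital ring and let a, d ∈ R be such that a is invertible along d. Let d⁻ be an inner inverse of d, set p = d·d⁻, and let w ∈ R be the element with w = p·w·p and w·(d·a·p) = (d·a·p)·w = p (w is the inverse of d·a·p in the corner ring pRp). Then d·a is group invertible, (d·a)^# = w + w²·d·a·(1−p), and its spectral idempotent is (d·a)^π := 1 − (d·a)·(d·a)^# = (1−p) − w·d·a·(1−p). -/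
theorem stmt_9 {R : Type*} [Ring R] (a d b : R) (h : IsInverseAlong b a d)
    (di : R) (hdi : d * di * d = d) (p : R) (hp : p = d * di)
    (w : R) (hw : w = p * w * p) (hw1 : w * (d * a * p) = p)
    (hw2 : (d * a * p) * w = p) :
    IsGroupInverse (w + w * w * (d * a) * (1 - p)) (d * a) ∧
      1 - (d * a) * (w + w * w * (d * a) * (1 - p)) =
        (1 - p) - w * (d * a) * (1 - p) := by
  have hpp : p * p = p := by
    rw [hp, show d * di * (d * di) = (d * di * d) * di from by noncomm_ring, hdi]
  have hpd : p * d = d := by rw [hp]; exact hdi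
  have hpw : p * w = w := by
    conv_lhs => rw [hw]
    rw [show p * (p * w * p) = (p * p) * w * p from by noncomm_ring, hpp, ← hw]
  have hwp : w * p = w := by
    conv_lhs => rw [hw]
    rw [show p * w * p * p = p * w * (p * p) from by noncomm_ring, hpp, ← hw]
  have h4 : d * a * w = p := by
    conv_lhs => rw [← hpw]
    rw [show d * a * (p * w) = (d * a * p) * w from by noncomm_ring, hw2]
  have h5 : w * (d * a) * p = p := by
    rw [show w * (d * a) * p = w * (d * a * p) from by noncomm_ring, hw1]
  have h6 : w * (d * a) * d = d := by
    have e : w * (d * a) * d = w * (d * a) * (p * d) := by rw [hpd]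
    rw [e, show w * (d * a) * (p * d) = (w * (d * a) * p) * d from by noncomm_ring, h5, hpd]
  have h1pda : (1 - p) * (d * a) = 0 := by
    rw [show (1 - p) * (d * a) = (d - p * d) * a from by noncomm_ring, hpd]
    noncomm_ring
  -- t * x = w * t
  have k1 : (d * a) * (w + w * w * (d * a) * (1 - p)) = w * (d * a) := by
    rw [show (d * a) * (w + w * w * (d * a) * (1 - p))
        = (d * a * w) + (d * a * w) * w * ((d * a) * (1 - p)) from by noncomm_ring, h4]
    rw [show p + p * w * (d * a * (1 - p)) = p + (p * w) * (d * a) - ((p * w) * (d * a)) * p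
        from by noncomm_ring, hpw, h5]
    noncomm_ring
  -- x * t = w * t
  have k2 : (w + w * w * (d * a) * (1 - p)) * (d * a) = w * (d * a) := by
    rw [show (w + w * w * (d * a) * (1 - p)) * (d * a)
        = w * (d * a) + w * w * ((1 - p) * (d * a)) + w * w * (d * a) * ((1 - p) * (d * a))
          - w * w * ((1 - p) * (d * a)) from by noncomm_ring, h1pda]
    noncomm_ring
  refine ⟨⟨?_, ?_, ?_⟩, ?_⟩
  · -- t * x * t = t
    rw [k1, show w * (d * a) * (d * a) = (w * (d * a) * d) * a from by noncomm_ring, h6]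
  · -- x * t * x = x
    have h1pw : (1 - p) * w = 0 := by
      rw [show (1 - p) * w = w - p * w from by noncomm_ring, hpw]; noncomm_ring
    rw [mul_assoc, k1]
    rw [show (w + w * w * (d * a) * (1 - p)) * (w * (d * a))
        = w * w * (d * a) + w * w * (d * a) * ((1 - p) * w) * (d * a)
        from by noncomm_ring, h1pw]
    rw [show w + w * w * (d * a) * (1 - p) = w + w * w * (d * a) - w * (w * (d * a) * p)
        from by noncomm_ring, h5, hwp]
    noncomm_ring
  · rw [k1, k2]
  · rw [k1]
    rw [show (1 : R) - p - w * (d * a) * (1 - p) = 1 - p - w * (d * a) + w * (d * a) * p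
        from by noncomm_ring, h5]
    noncomm_ring
end

section
/- Let R be a unital ring and let a, d ∈ R be such that a is invertible along d. Let d⁻ be an inner inverse of d, set p = d·d⁻, and let w ∈ R satisfy w = p·w·p and w·(d·a·p) = (d·a·p)·w = p. For t ∈ R, the element d·a + t·(d·a)^π is invertible in R if and only if −(1−p)·t·w·d·a·(1−p) + (1−p)·t·(1−p) is invertible in the corner ring (1−p)R(1−p) (i.e., there exists z with z = (1−p)·z·(1−p) whose products with it on both sides equal 1−p). Moreover, in this case a^{∥d} = (d·a + t·(d·a)^π)⁻¹·d. -/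
/-- Triangular element with invertible diagonal blocks is invertible,
with an explicit two-sided inverse. -/
private theorem tri_mul {R : Type*} [Ring R] {q A A' X B B' : R}
    (hAA' : A * A' = q) (hA'A : A' * A = q)
    (hqA : q * A = A) (hAq : A * q = A)
    (hqA' : q * A' = A') (hA'q : A' * q = A')
    (hqX : q * X = X) (hXq : X * q = 0)
    (hqB : q * B = 0) (hBq : B * q = 0)
    (hqB' : q * B' = 0) (hB'q : B' * q = 0)
    (hBB' : B * B' = 1 - q) (hB'B : B' * B = 1 - q) :
    (A + X + B) * (A' + B' - A' * X * B') = 1 ∧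
    (A' + B' - A' * X * B') * (A + X + B) = 1 := by
  have h1 : A * B' = 0 := by
    calc A * B' = (A * q) * B' := by rw [hAq]
      _ = A * (q * B') := by noncomm_ring
      _ = 0 := by rw [hqB']; noncomm_ring
  have h2 : A * (A' * X * B') = X * B' := by
    calc A * (A' * X * B') = ((A * A') * X) * B' := by noncomm_ring
      _ = (q * X) * B' := by rw [hAA']
      _ = X * B' := by rw [hqX]
  have h3 : X * A' = 0 := by
    calc X * A' = X * (q * A') := by rw [hqA']
      _ = (X * q) * A' := by noncomm_ring
      _ = 0 := by rw [hXq]; noncomm_ring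
  have h4 : X * (A' * X * B') = 0 := by
    calc X * (A' * X * B') = ((X * A') * X) * B' := by noncomm_ring
      _ = (((0 : R)) * X) * B' := by rw [h3]
      _ = 0 := by noncomm_ring
  have h5 : B * A' = 0 := by
    calc B * A' = B * (q * A') := by rw [hqA']
      _ = (B * q) * A' := by noncomm_ring
      _ = 0 := by rw [hBq]; noncomm_ring
  have h6 : B * (A' * X * B') = 0 := by
    calc B * (A' * X * B') = ((B * A') * X) * B' := by noncomm_ring
      _ = (((0 : R)) * X) * B' := by rw [h5]
      _ = 0 := by noncomm_ring
  have h7 : A' * B = 0 := by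
    calc A' * B = (A' * q) * B := by rw [hA'q]
      _ = A' * (q * B) := by noncomm_ring
      _ = 0 := by rw [hqB]; noncomm_ring
  have h8 : B' * A = 0 := by
    calc B' * A = B' * (q * A) := by rw [hqA]
      _ = (B' * q) * A := by noncomm_ring
      _ = 0 := by rw [hB'q]; noncomm_ring
  have h9 : B' * X = 0 := by
    calc B' * X = B' * (q * X) := by rw [hqX]
      _ = (B' * q) * X := by noncomm_ring
      _ = 0 := by rw [hB'q]; noncomm_ring
  have h10 : (A' * X * B') * A = 0 := by
    calc (A' * X * B') * A = (A' * X) * (B' * A) := by noncomm_ring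
      _ = (A' * X) * (0 : R) := by rw [h8]
      _ = 0 := by noncomm_ring
  have h11 : (A' * X * B') * X = 0 := by
    calc (A' * X * B') * X = (A' * X) * (B' * X) := by noncomm_ring
      _ = (A' * X) * (0 : R) := by rw [h9]
      _ = 0 := by noncomm_ring
  have h12 : (A' * X * B') * B = A' * X := by
    calc (A' * X * B') * B = (A' * X) * (B' * B) := by noncomm_ring
      _ = (A' * X) * (1 - q) := by rw [hB'B]
      _ = A' * X - A' * (X * q) := by noncomm_ring
      _ = A' * X - A' * (0 : R) := by rw [hXq]
      _ = A' * X := by noncomm_ring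
  constructor
  · calc (A + X + B) * (A' + B' - A' * X * B')
        = A * A' + A * B' - A * (A' * X * B')
            + (X * A' + X * B' - X * (A' * X * B'))
            + (B * A' + B * B' - B * (A' * X * B')) := by noncomm_ring
      _ = q + 0 - X * B' + ((0 : R) + X * B' - (0 : R))
            + ((0 : R) + (1 - q) - (0 : R)) := by
          rw [hAA', h1, h2, h3, h4, h5, hBB', h6]
      _ = 1 := by noncomm_ring
  · calc (A' + B' - A' * X * B') * (A + X + B)
        = A' * A + A' * X + A' * B + (B' * A + B' * X + B' * B)
            - ((A' * X * B') * A + (A' * X * B') * X + (A' * X * B') * B) := by noncomm_ring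
      _ = q + A' * X + 0 + ((0 : R) + (0 : R) + (1 - q))
            - ((0 : R) + (0 : R) + A' * X) := by
          rw [hA'A, h7, h8, h9, hB'B, h10, h11, h12]
      _ = 1 := by noncomm_ring

/-- If a triangular element (w.r.t. an idempotent `q`, with identity upper-left
block) is invertible, then its lower-right corner is invertible in the corner ring. -/
private theorem tri_corner {R : Type*} [Ring R] {q N m X C : R}
    (hN : N = q + X + C) (hqq : q * q = q)
    (hqX : q * X = X) (hXq : X * q = 0)
    (hqC : q * C = 0) (hCq : C * q = 0)
    (hNm : N * m = 1) (hmN : m * N = 1) :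
    ((1 - q) * m * (1 - q)) * C = 1 - q ∧ C * ((1 - q) * m * (1 - q)) = 1 - q := by
  have hNq : N * q = q := by
    rw [hN]
    calc (q + X + C) * q = q * q + X * q + C * q := by noncomm_ring
      _ = q := by rw [hqq, hXq, hCq]; abel
  have hmq : m * q = q := by
    calc m * q = m * (N * q) := by rw [hNq]
      _ = (m * N) * q := by noncomm_ring
      _ = (1 : R) * q := by rw [hmN]
      _ = q := by noncomm_ring
  have h1qN : (1 - q) * N = C := by
    rw [hN]
    calc (1 - q) * (q + X + C) = q + X + C - (q * q + q * X + q * C) := by noncomm_ring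
      _ = C := by rw [hqq, hqX, hqC]; noncomm_ring
  constructor
  · calc ((1 - q) * m * (1 - q)) * C = (1 - q) * m * (C - q * C) := by noncomm_ring
      _ = (1 - q) * m * (C - (0 : R)) := by rw [hqC]
      _ = (1 - q) * m * ((1 - q) * N) := by rw [h1qN]; noncomm_ring
      _ = (1 - q) * ((m - m * q) * N) := by noncomm_ring
      _ = (1 - q) * ((m - q) * N) := by rw [hmq]
      _ = (1 - q) * (m * N) - ((1 - q) * q) * N := by noncomm_ring
      _ = (1 - q) * (1 : R) - (q - q * q) * N := by rw [hmN]; noncomm_ring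
      _ = 1 - q := by rw [hqq]; noncomm_ring
  · calc C * ((1 - q) * m * (1 - q)) = (C - C * q) * (m * (1 - q)) := by noncomm_ring
      _ = (C - (0 : R)) * (m * (1 - q)) := by rw [hCq]
      _ = ((1 - q) * N) * (m * (1 - q)) := by rw [h1qN]; noncomm_ring
      _ = (1 - q) * ((N * m) * (1 - q)) := by noncomm_ring
      _ = (1 - q) * ((1 : R) * (1 - q)) := by rw [hNm]
      _ = 1 - q - q + q * q := by noncomm_ring
      _ = 1 - q := by rw [hqq]; noncomm_ring

theorem stmt_10 {R : Type*} [Ring R] (a d b : R) (h : IsInverseAlong b a d)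
    (di : R) (hdi : d * di * d = d) (p : R) (hp : p = d * di)
    (w : R) (hw : w = p * w * p) (hw1 : w * (d * a * p) = p)
    (hw2 : (d * a * p) * w = p) (t : R) (g : R) (hg : IsGroupInverse g (d * a)) :
    (IsUnit (d * a + t * (1 - d * a * g)) ↔
      ∃ z, z = (1 - p) * z * (1 - p) ∧
        z * (-((1 - p) * t * w * (d * a) * (1 - p)) + (1 - p) * t * (1 - p)) = 1 - p ∧
        (-((1 - p) * t * w * (d * a) * (1 - p)) + (1 - p) * t * (1 - p)) * z = 1 - p) ∧
      (IsUnit (d * a + t * (1 - d * a * g)) →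
        b = Ring.inverse (d * a + t * (1 - d * a * g)) * d) := by
  obtain ⟨hbab, hbR, hRb⟩ := h
  obtain ⟨hg1, hg2, hg3⟩ := hg
  -- extract representations from the range conditions
  obtain ⟨r2, hr2⟩ : ∃ r : R, b = d * r := by
    have h1 : b ∈ {x : R | ∃ r, x = b * r} := ⟨1, (mul_one b).symm⟩
    rw [hbR] at h1
    exact h1
  obtain ⟨r3, hr3⟩ : ∃ r : R, d = r * b := by
    have h1 : d ∈ {x : R | ∃ r, x = r * d} := ⟨1, (one_mul d).symm⟩
    rw [← hRb] at h1
    exact h1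
  -- basic facts
  have hpp : p * p = p := by
    rw [hp]
    calc d * di * (d * di) = (d * di * d) * di := by noncomm_ring
      _ = d * di := by rw [hdi]
  have hpda : p * (d * a) = d * a := by
    rw [hp]
    calc d * di * (d * a) = (d * di * d) * a := by noncomm_ring
      _ = d * a := by rw [hdi]
  have hdab : d * a * b = d := by
    rw [hr3]
    have e : r3 * b * a * b = r3 * (b * a * b) := by noncomm_ring
    rw [e, hbab]
  have hdaw : d * a * w = p := by
    rw [hw]
    calc d * a * (p * w * p) = (d * a * p * w) * p := by noncomm_ring
      _ = p * p := by rw [hw2]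
      _ = p := hpp
  have hQd : d * a * g * d = d := by
    calc d * a * g * d = d * a * g * (d * a * b) := by rw [hdab]
      _ = (d * a * g * (d * a)) * b := by noncomm_ring
      _ = d * a * b := by rw [hg1]
      _ = d := hdab
  have hQp : d * a * g * p = p := by
    rw [hp]
    calc d * a * g * (d * di) = (d * a * g * d) * di := by noncomm_ring
      _ = d * di := by rw [hQd]
  have hpQ : p * (d * a * g) = d * a * g := by
    calc p * (d * a * g) = (p * (d * a)) * g := by noncomm_ring
      _ = d * a * g := by rw [hpda]
  have hQQ : d * a * g * (d * a * g) = d * a * g := by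
    calc d * a * g * (d * a * g) = (d * a * g * (d * a)) * g := by noncomm_ring
      _ = d * a * g := by rw [hg1]
  have hQw : d * a * g * w = w := by
    rw [hw]
    calc d * a * g * (p * w * p) = (d * a * g * p) * (w * p) := by noncomm_ring
      _ = p * (w * p) := by rw [hQp]
      _ = p * w * p := by noncomm_ring
  have hdaQ : d * a * (d * a * g) = d * a := by
    calc d * a * (d * a * g) = d * a * (g * (d * a)) := by rw [hg3]
      _ = (d * a * g) * (d * a) := by noncomm_ring
      _ = d * a := hg1
  have hgQ : g * (d * a * g) = g := by
    calc g * (d * a * g) = (g * (d * a)) * g := by noncomm_ring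
      _ = g := hg2
  have hQg : d * a * g * g = g := by
    calc d * a * g * g = (g * (d * a)) * g := by rw [hg3]
      _ = g := hg2
  -- the key identity: w * (d * a) = d * a * g
  have hsub : d * a * g - w * (d * a) = 0 := by
    have h1 : d * a * (d * a * g - w * (d * a)) = 0 := by
      calc d * a * (d * a * g - w * (d * a))
          = d * a * (d * a * g) - (d * a * w) * (d * a) := by noncomm_ring
        _ = d * a - p * (d * a) := by rw [hdaQ, hdaw]
        _ = 0 := by rw [hpda]; noncomm_ring
    have h2 : d * a * g * (d * a * g - w * (d * a)) = d * a * g - w * (d * a) := by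
      calc d * a * g * (d * a * g - w * (d * a))
          = d * a * g * (d * a * g) - (d * a * g * w) * (d * a) := by noncomm_ring
        _ = d * a * g - w * (d * a) := by rw [hQQ, hQw]
    calc d * a * g - w * (d * a) = d * a * g * (d * a * g - w * (d * a)) := h2.symm
      _ = g * (d * a * (d * a * g - w * (d * a))) := by rw [hg3]; noncomm_ring
      _ = g * (0 : R) := by rw [h1]
      _ = 0 := by noncomm_ring
  have hwda : w * (d * a) = d * a * g := (sub_eq_zero.mp hsub).symm
  have hwQ : w * (d * a * g) = g := by
    calc w * (d * a * g) = (w * (d * a)) * g := by noncomm_ring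
      _ = d * a * g * g := by rw [hwda]
      _ = g := hQg
  have hQb : d * a * g * b = b := by
    rw [hr2]
    calc d * a * g * (d * r2) = (d * a * g * d) * r2 := by noncomm_ring
      _ = d * r2 := by rw [hQd]
  -- spectral idempotent facts
  have hQ1q : d * a * g * (1 - d * a * g) = 0 := by
    calc d * a * g * (1 - d * a * g) = d * a * g - d * a * g * (d * a * g) := by noncomm_ring
      _ = 0 := by rw [hQQ]; noncomm_ring
  have h1qQ : (1 - d * a * g) * (d * a * g) = 0 := by
    calc (1 - d * a * g) * (d * a * g) = d * a * g - d * a * g * (d * a * g) := by noncomm_ring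
      _ = 0 := by rw [hQQ]; noncomm_ring
  have hπda : (1 - d * a * g) * (d * a) = 0 := by
    calc (1 - d * a * g) * (d * a) = d * a - d * a * g * (d * a) := by noncomm_ring
      _ = 0 := by rw [hg1]; noncomm_ring
  have hdaπ : d * a * (1 - d * a * g) = 0 := by
    calc d * a * (1 - d * a * g) = d * a - d * a * (d * a * g) := by noncomm_ring
      _ = 0 := by rw [hdaQ]; noncomm_ring
  have hπw : (1 - d * a * g) * w = 0 := by
    calc (1 - d * a * g) * w = w - d * a * g * w := by noncomm_ring
      _ = 0 := by rw [hQw]; noncomm_ring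
  have hπp : (1 - d * a * g) * p = 0 := by
    calc (1 - d * a * g) * p = p - d * a * g * p := by noncomm_ring
      _ = 0 := by rw [hQp]; noncomm_ring
  have hπb : (1 - d * a * g) * b = 0 := by
    calc (1 - d * a * g) * b = b - d * a * g * b := by noncomm_ring
      _ = 0 := by rw [hQb]; noncomm_ring
  have hππ : (1 - d * a * g) * (1 - d * a * g) = 1 - d * a * g := by
    calc (1 - d * a * g) * (1 - d * a * g)
        = 1 - d * a * g - d * a * g + d * a * g * (d * a * g) := by noncomm_ring
      _ = 1 - d * a * g := by rw [hQQ]; noncomm_ring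
  have h1q1p : (1 - d * a * g) * (1 - p) = 1 - d * a * g := by
    calc (1 - d * a * g) * (1 - p) = 1 - p - d * a * g + d * a * g * p := by noncomm_ring
      _ = 1 - d * a * g := by rw [hQp]; noncomm_ring
  have h1p1q : (1 - p) * (1 - d * a * g) = 1 - p := by
    calc (1 - p) * (1 - d * a * g) = 1 - d * a * g - p + p * (d * a * g) := by noncomm_ring
      _ = 1 - p := by rw [hpQ]; noncomm_ring
  have h1p1p : (1 - p) * (1 - p) = 1 - p := by
    calc (1 - p) * (1 - p) = 1 - p - p + p * p := by noncomm_ring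
      _ = 1 - p := by rw [hpp]; noncomm_ring
  -- identification of the corner element
  have hu : -((1 - p) * t * w * (d * a) * (1 - p)) + (1 - p) * t * (1 - p)
      = (1 - p) * (t * (1 - d * a * g)) := by
    calc -((1 - p) * t * w * (d * a) * (1 - p)) + (1 - p) * t * (1 - p)
        = -((1 - p) * t * (w * (d * a)) * (1 - p)) + (1 - p) * t * (1 - p) := by noncomm_ring
      _ = -((1 - p) * t * (d * a * g) * (1 - p)) + (1 - p) * t * (1 - p) := by rw [hwda]
      _ = (1 - p) * (t * ((1 - d * a * g) * (1 - p))) := by noncomm_ring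
      _ = (1 - p) * (t * (1 - d * a * g)) := by rw [h1q1p]
  have hMwπ : (d * a + t * (1 - d * a * g)) * (w + (1 - d * a * g))
      = p + t * (1 - d * a * g) := by
    calc (d * a + t * (1 - d * a * g)) * (w + (1 - d * a * g))
        = d * a * w + d * a * (1 - d * a * g) + t * ((1 - d * a * g) * w)
            + t * ((1 - d * a * g) * (1 - d * a * g)) := by noncomm_ring
      _ = p + 0 + t * (0 : R) + t * (1 - d * a * g) := by rw [hdaw, hdaπ, hπw, hππ]
      _ = p + t * (1 - d * a * g) := by noncomm_ring
  -- w + (1 - d*a*g) is invertible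
  have htri1 := tri_mul (R := R) (q := d * a * g) (A := g) (A' := d * a)
      (X := w - g) (B := 1 - d * a * g) (B' := 1 - d * a * g)
      hg3.symm rfl hQg hgQ hg1 hdaQ
      (by calc d * a * g * (w - g) = d * a * g * w - d * a * g * g := by noncomm_ring
            _ = w - g := by rw [hQw, hQg])
      (by calc (w - g) * (d * a * g) = w * (d * a * g) - g * (d * a * g) := by noncomm_ring
            _ = g - g := by rw [hwQ, hgQ]
            _ = 0 := by noncomm_ring)
      hQ1q h1qQ hQ1q h1qQ hππ hππ
  have hsum1 : g + (w - g) + (1 - d * a * g) = w + (1 - d * a * g) := by noncomm_ring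
  obtain ⟨v, hwπv, hvwπ⟩ : ∃ v : R, (w + (1 - d * a * g)) * v = 1 ∧
      v * (w + (1 - d * a * g)) = 1 :=
    ⟨d * a + (1 - d * a * g) - d * a * (w - g) * (1 - d * a * g),
      by rw [← hsum1]; exact htri1.1, by rw [← hsum1]; exact htri1.2⟩
  constructor
  · constructor
    · -- forward direction
      intro hM
      obtain ⟨uu, huu⟩ := hM
      obtain ⟨m0, hm2, hm1⟩ : ∃ m0 : R, (d * a + t * (1 - d * a * g)) * m0 = 1 ∧
          m0 * (d * a + t * (1 - d * a * g)) = 1 :=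
        ⟨↑uu⁻¹, by rw [← huu]; exact uu.mul_inv, by rw [← huu]; exact uu.inv_mul⟩
      have hN'eq : (w + (1 - d * a * g)) * (d * a + t * (1 - d * a * g))
          = d * a * g + w * (t * (1 - d * a * g))
            + (1 - d * a * g) * (t * (1 - d * a * g)) := by
        calc (w + (1 - d * a * g)) * (d * a + t * (1 - d * a * g))
            = w * (d * a) + w * (t * (1 - d * a * g)) + (1 - d * a * g) * (d * a)
                + (1 - d * a * g) * (t * (1 - d * a * g)) := by noncomm_ring
          _ = d * a * g + w * (t * (1 - d * a * g)) + (0 : R)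
                + (1 - d * a * g) * (t * (1 - d * a * g)) := by rw [hwda, hπda]
          _ = _ := by noncomm_ring
      have hNm : ((w + (1 - d * a * g)) * (d * a + t * (1 - d * a * g))) * (m0 * v) = 1 := by
        calc ((w + (1 - d * a * g)) * (d * a + t * (1 - d * a * g))) * (m0 * v)
            = (w + (1 - d * a * g)) * (((d * a + t * (1 - d * a * g)) * m0) * v) := by
              noncomm_ring
          _ = (w + (1 - d * a * g)) * ((1 : R) * v) := by rw [hm2]
          _ = (w + (1 - d * a * g)) * v := by noncomm_ring
          _ = 1 := hwπv
      have hmN : (m0 * v) * ((w + (1 - d * a * g)) * (d * a + t * (1 - d * a * g))) = 1 := by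
        calc (m0 * v) * ((w + (1 - d * a * g)) * (d * a + t * (1 - d * a * g)))
            = m0 * ((v * (w + (1 - d * a * g))) * (d * a + t * (1 - d * a * g))) := by
              noncomm_ring
          _ = m0 * ((1 : R) * (d * a + t * (1 - d * a * g))) := by rw [hvwπ]
          _ = m0 * (d * a + t * (1 - d * a * g)) := by noncomm_ring
          _ = 1 := hm1
      have hqX2 : d * a * g * (w * (t * (1 - d * a * g))) = w * (t * (1 - d * a * g)) := by
        calc d * a * g * (w * (t * (1 - d * a * g)))
            = (d * a * g * w) * (t * (1 - d * a * g)) := by noncomm_ring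
          _ = w * (t * (1 - d * a * g)) := by rw [hQw]
      have hXq2 : (w * (t * (1 - d * a * g))) * (d * a * g) = 0 := by
        calc (w * (t * (1 - d * a * g))) * (d * a * g)
            = w * (t * ((1 - d * a * g) * (d * a * g))) := by noncomm_ring
          _ = w * (t * (0 : R)) := by rw [h1qQ]
          _ = 0 := by noncomm_ring
      have hqC2 : d * a * g * ((1 - d * a * g) * (t * (1 - d * a * g))) = 0 := by
        calc d * a * g * ((1 - d * a * g) * (t * (1 - d * a * g)))
            = (d * a * g * (1 - d * a * g)) * (t * (1 - d * a * g)) := by noncomm_ring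
          _ = (0 : R) * (t * (1 - d * a * g)) := by rw [hQ1q]
          _ = 0 := by noncomm_ring
      have hCq2 : ((1 - d * a * g) * (t * (1 - d * a * g))) * (d * a * g) = 0 := by
        calc ((1 - d * a * g) * (t * (1 - d * a * g))) * (d * a * g)
            = (1 - d * a * g) * (t * ((1 - d * a * g) * (d * a * g))) := by noncomm_ring
          _ = (1 - d * a * g) * (t * (0 : R)) := by rw [h1qQ]
          _ = 0 := by noncomm_ring
      obtain ⟨hzC, hCz⟩ := tri_corner hN'eq hQQ hqX2 hXq2 hqC2 hCq2 hNm hmN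
      set Z : R := (1 - d * a * g) * (m0 * v) * (1 - d * a * g) with hZ
      have hZ1p : Z * (1 - p) = Z := by
        rw [hZ]
        calc (1 - d * a * g) * (m0 * v) * (1 - d * a * g) * (1 - p)
            = (1 - d * a * g) * (m0 * v) * ((1 - d * a * g) * (1 - p)) := by noncomm_ring
          _ = (1 - d * a * g) * (m0 * v) * (1 - d * a * g) := by rw [h1q1p]
      have hZ1q : Z * (1 - d * a * g) = Z := by
        rw [hZ]
        calc (1 - d * a * g) * (m0 * v) * (1 - d * a * g) * (1 - d * a * g)
            = (1 - d * a * g) * (m0 * v) * ((1 - d * a * g) * (1 - d * a * g)) := by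
              noncomm_ring
          _ = (1 - d * a * g) * (m0 * v) * (1 - d * a * g) := by rw [hππ]
      have h1qZ : (1 - d * a * g) * Z = Z := by
        rw [hZ]
        calc (1 - d * a * g) * ((1 - d * a * g) * (m0 * v) * (1 - d * a * g))
            = ((1 - d * a * g) * (1 - d * a * g)) * ((m0 * v) * (1 - d * a * g)) := by
              noncomm_ring
          _ = (1 - d * a * g) * ((m0 * v) * (1 - d * a * g)) := by rw [hππ]
          _ = (1 - d * a * g) * (m0 * v) * (1 - d * a * g) := by noncomm_ring
      refine ⟨(1 - p) * Z, ?_, ?_, ?_⟩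
      · calc (1 - p) * Z = (1 - p) * (Z * (1 - p)) := by rw [hZ1p]
          _ = ((1 - p) * (1 - p)) * (Z * (1 - p)) := by rw [h1p1p]
          _ = (1 - p) * ((1 - p) * Z) * (1 - p) := by noncomm_ring
      · rw [hu]
        calc (1 - p) * Z * ((1 - p) * (t * (1 - d * a * g)))
            = (1 - p) * ((Z * (1 - p)) * (t * (1 - d * a * g))) := by noncomm_ring
          _ = (1 - p) * (Z * (t * (1 - d * a * g))) := by rw [hZ1p]
          _ = (1 - p) * ((Z * (1 - d * a * g)) * (t * (1 - d * a * g))) := by rw [hZ1q]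
          _ = (1 - p) * (Z * ((1 - d * a * g) * (t * (1 - d * a * g)))) := by noncomm_ring
          _ = (1 - p) * (1 - d * a * g) := by rw [hzC]
          _ = 1 - p := h1p1q
      · rw [hu]
        calc (1 - p) * (t * (1 - d * a * g)) * ((1 - p) * Z)
            = (1 - p) * (t * (((1 - d * a * g) * (1 - p)) * Z)) := by noncomm_ring
          _ = (1 - p) * (t * ((1 - d * a * g) * Z)) := by rw [h1q1p]
          _ = (1 - p) * (t * Z) := by rw [h1qZ]
          _ = ((1 - p) * (1 - d * a * g)) * (t * Z) := by rw [h1p1q]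
          _ = (1 - p) * ((1 - d * a * g) * (t * ((1 - d * a * g) * Z))) := by
              rw [h1qZ]; noncomm_ring
          _ = (1 - p) * (((1 - d * a * g) * (t * (1 - d * a * g))) * Z) := by noncomm_ring
          _ = (1 - p) * (1 - d * a * g) := by rw [hCz]
          _ = 1 - p := h1p1q
    · -- backward direction
      rintro ⟨z, hz1, hz2, hz3⟩
      rw [hu] at hz2 hz3
      have hpz : p * z = 0 := by
        rw [hz1]
        calc p * ((1 - p) * z * (1 - p)) = (p - p * p) * (z * (1 - p)) := by noncomm_ring
          _ = (p - p) * (z * (1 - p)) := by rw [hpp]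
          _ = 0 := by noncomm_ring
      have hzp : z * p = 0 := by
        rw [hz1]
        calc (1 - p) * z * (1 - p) * p = ((1 - p) * z) * (p - p * p) := by noncomm_ring
          _ = ((1 - p) * z) * (p - p) := by rw [hpp]
          _ = 0 := by noncomm_ring
      have hqX3 : p * (p * (t * (1 - d * a * g))) = p * (t * (1 - d * a * g)) := by
        calc p * (p * (t * (1 - d * a * g))) = (p * p) * (t * (1 - d * a * g)) := by
              noncomm_ring
          _ = p * (t * (1 - d * a * g)) := by rw [hpp]
      have hXq3 : (p * (t * (1 - d * a * g))) * p = 0 := by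
        calc (p * (t * (1 - d * a * g))) * p = p * (t * ((1 - d * a * g) * p)) := by
              noncomm_ring
          _ = p * (t * (0 : R)) := by rw [hπp]
          _ = 0 := by noncomm_ring
      have hqB3 : p * ((1 - p) * (t * (1 - d * a * g))) = 0 := by
        calc p * ((1 - p) * (t * (1 - d * a * g)))
            = (p - p * p) * (t * (1 - d * a * g)) := by noncomm_ring
          _ = (p - p) * (t * (1 - d * a * g)) := by rw [hpp]
          _ = 0 := by noncomm_ring
      have hBq3 : ((1 - p) * (t * (1 - d * a * g))) * p = 0 := by
        calc ((1 - p) * (t * (1 - d * a * g))) * p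
            = (1 - p) * (t * ((1 - d * a * g) * p)) := by noncomm_ring
          _ = (1 - p) * (t * (0 : R)) := by rw [hπp]
          _ = 0 := by noncomm_ring
      have htri2 := tri_mul (R := R) (q := p) (A := p) (A' := p)
          (X := p * (t * (1 - d * a * g))) (B := (1 - p) * (t * (1 - d * a * g))) (B' := z)
          hpp hpp hpp hpp hpp hpp hqX3 hXq3 hqB3 hBq3 hpz hzp hz3 hz2
      have hsum2 : p + p * (t * (1 - d * a * g)) + (1 - p) * (t * (1 - d * a * g))
          = p + t * (1 - d * a * g) := by noncomm_ring
      have hNunit : IsUnit (p + t * (1 - d * a * g)) := by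
        rw [← hsum2]
        exact isUnit_iff_exists.mpr ⟨_, htri2.1, htri2.2⟩
      have hvunit : IsUnit v := isUnit_iff_exists.mpr ⟨w + (1 - d * a * g), hvwπ, hwπv⟩
      have hMeq : d * a + t * (1 - d * a * g) = (p + t * (1 - d * a * g)) * v := by
        calc d * a + t * (1 - d * a * g)
            = (d * a + t * (1 - d * a * g)) * ((w + (1 - d * a * g)) * v) := by
              rw [hwπv]; noncomm_ring
          _ = ((d * a + t * (1 - d * a * g)) * (w + (1 - d * a * g))) * v := by noncomm_ring
          _ = (p + t * (1 - d * a * g)) * v := by rw [hMwπ]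
      rw [hMeq]
      exact hNunit.mul hvunit
  · -- the formula for the inverse along d
    intro hM
    have hMb : (d * a + t * (1 - d * a * g)) * b = d := by
      calc (d * a + t * (1 - d * a * g)) * b
          = d * a * b + t * ((1 - d * a * g) * b) := by noncomm_ring
        _ = d + t * (0 : R) := by rw [hdab, hπb]
        _ = d := by noncomm_ring
    have hinv : Ring.inverse (d * a + t * (1 - d * a * g)) * (d * a + t * (1 - d * a * g)) = 1 :=
      Ring.inverse_mul_cancel _ hM
    calc b = (Ring.inverse (d * a + t * (1 - d * a * g))
            * (d * a + t * (1 - d * a * g))) * b := by rw [hinv]; noncomm_ring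
      _ = Ring.inverse (d * a + t * (1 - d * a * g))
            * ((d * a + t * (1 - d * a * g)) * b) := by noncomm_ring
      _ = Ring.inverse (d * a + t * (1 - d * a * g)) * d := by rw [hMb]
end

section
/- Let B be a complex unital Banach algebra and let a, d, f ∈ B with d regular. Suppose 0 is not a limit point of the spectrum σ(d·a) (so there is ε > 0 with σ(d·a) ∩ {z ∈ ℂ : 0 < |z| < ε} = ∅, and hence d·a + t·1 is invertible for all small t ≠ 0). If the limit of (d·a + t·1)⁻¹·f as t → 0 (t ≠ 0) exists, then f ∈ dB. -/
open Filter

theorem stmt_14 {B : Type*} [NormedRing B] [NormedAlgebra ℂ B] [CompleteSpace B]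
    (a d f : B) (hd : ∃ x, d * x * d = d)
    (hσ : ∃ ε > (0 : ℝ), ∀ z ∈ spectrum ℂ (d * a), z ≠ 0 → ε ≤ ‖z‖)
    (hlim : ∃ L, Tendsto (fun t : ℂ => Ring.inverse (d * a + t • (1 : B)) * f)
      (nhdsWithin 0 {t : ℂ | t ≠ 0}) (nhds L)) :
    ∃ u, f = d * u := by
  obtain ⟨x, hx⟩ := hd
  obtain ⟨ε, hε, hspec⟩ := hσ
  obtain ⟨L, hL⟩ := hlim
  have hne : ({t : ℂ | t ≠ 0} : Set ℂ) = {(0:ℂ)}ᶜ := by ext t; simp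
  have hNeBot : (nhdsWithin (0:ℂ) {t : ℂ | t ≠ 0}).NeBot := by
    rw [hne]; infer_instance
  -- eventually units
  have hev : ∀ᶠ t in nhdsWithin (0:ℂ) {t : ℂ | t ≠ 0},
      IsUnit (d * a + t • (1 : B)) := by
    have hsmall : ∀ᶠ t in nhdsWithin (0:ℂ) {t : ℂ | t ≠ 0}, ‖t‖ < ε := by
      apply Filter.eventually_iff_exists_mem.mpr
      refine ⟨Metric.ball 0 ε ∩ {t : ℂ | t ≠ 0}, ?_, ?_⟩
      · exact Filter.inter_mem (nhdsWithin_le_nhds (Metric.ball_mem_nhds 0 hε)) self_mem_nhdsWithin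
      · intro t ht
        simpa [dist_eq_norm] using ht.1
    have hne0 : ∀ᶠ t in nhdsWithin (0:ℂ) {t : ℂ | t ≠ 0}, t ≠ 0 :=
      eventually_mem_nhdsWithin
    filter_upwards [hsmall, hne0] with t ht ht0
    have hmem : (-t) ∉ spectrum ℂ (d * a) := by
      intro hmem
      have := hspec (-t) hmem (by simpa using ht0)
      simp only [norm_neg] at this
      linarith
    rw [spectrum.notMem_iff] at hmem
    have : algebraMap ℂ B (-t) - d * a = -(d * a + t • (1 : B)) := by
      rw [Algebra.algebraMap_eq_smul_one]
      simp [neg_smul]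
      abel
    rw [this] at hmem
    exact (IsUnit.neg_iff _).mp hmem
  -- the key identity
  have hkey : ∀ᶠ t in nhdsWithin (0:ℂ) {t : ℂ | t ≠ 0},
      (d * a) * (Ring.inverse (d * a + t • (1 : B)) * f)
        = f - t • (Ring.inverse (d * a + t • (1 : B)) * f) := by
    filter_upwards [hev] with t ht
    have h1 : (d * a + t • (1 : B)) * Ring.inverse (d * a + t • (1 : B)) = 1 :=
      Ring.mul_inverse_cancel _ ht
    have h2 : (d * a + t • (1 : B)) * (Ring.inverse (d * a + t • (1 : B)) * f) = f := by
      rw [← mul_assoc, h1, one_mul]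
    calc (d * a) * (Ring.inverse (d * a + t • (1 : B)) * f)
        = (d * a + t • (1 : B)) * (Ring.inverse (d * a + t • (1 : B)) * f)
          - (t • (1 : B)) * (Ring.inverse (d * a + t • (1 : B)) * f) := by
          rw [add_mul]; abel
      _ = f - t • (Ring.inverse (d * a + t • (1 : B)) * f) := by
          rw [h2, smul_mul_assoc, one_mul]
  -- limits
  have hT : Tendsto (fun t : ℂ => t) (nhdsWithin (0:ℂ) {t : ℂ | t ≠ 0}) (nhds 0) :=
    (continuous_id.tendsto 0).mono_left nhdsWithin_le_nhds
  have hRHS : Tendsto (fun t : ℂ => f - t • (Ring.inverse (d * a + t • (1 : B)) * f))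
      (nhdsWithin (0:ℂ) {t : ℂ | t ≠ 0}) (nhds f) := by
    have h0 : Tendsto (fun t : ℂ => t • (Ring.inverse (d * a + t • (1 : B)) * f))
        (nhdsWithin (0:ℂ) {t : ℂ | t ≠ 0}) (nhds ((0:ℂ) • L)) := hT.smul hL
    have := (tendsto_const_nhds (x := f)).sub h0
    simpa using this
  have hg : Tendsto (fun t : ℂ => (d * a) * (Ring.inverse (d * a + t • (1 : B)) * f))
      (nhdsWithin (0:ℂ) {t : ℂ | t ≠ 0}) (nhds f) := hRHS.congr' (hkey.mono fun t h => h.symm)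
  have hg2 : Tendsto (fun t : ℂ => (d * x) * ((d * a) * (Ring.inverse (d * a + t • (1 : B)) * f)))
      (nhdsWithin (0:ℂ) {t : ℂ | t ≠ 0}) (nhds ((d * x) * f)) := hg.const_mul _
  have heq : ∀ t : ℂ, (d * x) * ((d * a) * (Ring.inverse (d * a + t • (1 : B)) * f))
      = (d * a) * (Ring.inverse (d * a + t • (1 : B)) * f) := by
    intro t
    rw [← mul_assoc, ← mul_assoc, show d * x * (d * a) = d * a by rw [← mul_assoc, hx], mul_assoc]
  have hg2' : Tendsto (fun t : ℂ => (d * a) * (Ring.inverse (d * a + t • (1 : B)) * f))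
      (nhdsWithin (0:ℂ) {t : ℂ | t ≠ 0}) (nhds ((d * x) * f)) := by
    refine hg2.congr fun t => heq t
  have : (d * x) * f = f := tendsto_nhds_unique hg2' hg
  exact ⟨x * f, by rw [← mul_assoc]; exact this.symm⟩
end
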